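/- arXiv:2012.10571 — 9 statements merged into one kernel-verified Lean document; each statement's English description precedes it below -/
import Mathlib

section
/- If a ∈ R has a generalized Zhou inverse b, then b is also a p-Drazin inverse of a; in particular a − a²b ∈ √J(R). -/
/-- x lies in the Jacobson radical: 1 - y*x is a unit for every y. -/
def inRadJ {R : Type*} [Ring R] (x : R) : Prop := ∀ y : R, IsUnit (1 - y * x)

/-- x ∈ √J(R): some power of x lies in the Jacobson radical. -/
def inSqrtJ {R : Type*} [Ring R] (x : R) : Prop := ∃ m : ℕ, 0 < m ∧ inRadJ (x ^ m)

/-- x belongs to the double commutant of a. -/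
def inComm2 {R : Type*} [Ring R] (a x : R) : Prop :=
  ∀ y : R, y * a = a * y → x * y = y * x

/-- b is a generalized Zhou inverse of a. -/
def IsGZhouInv {R : Type*} [Ring R] (a b : R) : Prop :=
  b * a * b = b ∧ inComm2 a b ∧ ∃ n : ℕ, 0 < n ∧ inSqrtJ (a ^ n - a * b)

/-- b is a Zhou inverse of a. -/
def IsZhouInv {R : Type*} [Ring R] (a b : R) : Prop :=
  b * a * b = b ∧ inComm2 a b ∧ ∃ n : ℕ, 0 < n ∧ IsNilpotent (a ^ n - a * b)

/-- The classical trick: `1 - ab` a unit implies `1 - ba` is a unit. -/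
private lemma isUnit_one_sub_swap' {R : Type*} [Ring R] {a b : R}
    (h : IsUnit (1 - a * b)) : IsUnit (1 - b * a) := by
  obtain ⟨u, hu⟩ := h
  set v : R := ↑u⁻¹ with hv
  have h1 : (1 - a * b) * v = 1 := by rw [← hu, hv, Units.mul_inv]
  have h2 : v * (1 - a * b) = 1 := by rw [← hu, hv, Units.inv_mul]
  have e1 : a * b * v = v - 1 := by
    have : v - a * b * v = 1 := by rw [← h1]; noncomm_ring
    linear_combination (norm := noncomm_ring) -this
  have e2 : v * (a * b) = v - 1 := by
    have : v - v * (a * b) = 1 := by rw [← h2]; noncomm_ring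
    linear_combination (norm := noncomm_ring) -this
  refine ⟨⟨1 - b * a, 1 + b * v * a, ?_, ?_⟩, rfl⟩
  · have : (1 - b * a) * (1 + b * v * a)
        = 1 - b * a + b * v * a - b * (a * b * v) * a := by noncomm_ring
    rw [this, e1]; noncomm_ring
  · have : (1 + b * v * a) * (1 - b * a)
        = 1 - b * a + b * v * a - b * (v * (a * b)) * a := by noncomm_ring
    rw [this, e2]; noncomm_ring

/-- The (one-sided) Jacobson radical condition is stable under right multiplication. -/
private lemma inRadJ_mul_right' {R : Type*} [Ring R] {x : R} (hx : inRadJ x) (r : R) :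
    inRadJ (x * r) := by
  intro y
  have h1 : IsUnit (1 - (r * y) * x) := hx (r * y)
  have h2 : IsUnit (1 - r * (y * x)) := by rw [← mul_assoc]; exact h1
  have := isUnit_one_sub_swap' h2
  rwa [show y * x * r = y * (x * r) by rw [mul_assoc]] at this

private lemma main_aux {R : Type*} [Ring R] (a p : R) (hpa : a * p = p * a)
    (hpp : p * p = p) (n m : ℕ) (hn : 0 < n) (hm : 0 < m)
    (hrad : inRadJ ((a ^ n - p) ^ m)) : inRadJ ((a * (1 - p)) ^ (n * m)) := by
  have hap : Commute a p := hpa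
  have hcomm1 : Commute a (1 - p) := by
    simpa using (Commute.one_right a).sub_right hap
  have hq : IsIdempotentElem (1 - p) := IsIdempotentElem.one_sub hpp
  have hqpow : ∀ k : ℕ, 0 < k → (1 - p) ^ k = 1 - p := by
    rintro (_ | k) hk
    · exact absurd hk (lt_irrefl 0)
    · exact hq.pow_succ_eq k
  have hcn : (a * (1 - p)) ^ n = a ^ n * (1 - p) := by
    rw [hcomm1.mul_pow, hqpow n hn]
  have hw : a ^ n * (1 - p) = (a ^ n - p) * (1 - p) := by
    have : p * (1 - p) = 0 := by rw [mul_sub, mul_one, hpp, sub_self]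
    rw [sub_mul, this, sub_zero]
  have hcomm2 : Commute (a ^ n - p) (1 - p) := by
    have h1 : Commute (a ^ n - p) p := (hap.pow_left n).sub_left (Commute.refl p)
    simpa using (Commute.one_right (a ^ n - p)).sub_right h1
  have key : (a * (1 - p)) ^ (n * m) = (a ^ n - p) ^ m * (1 - p) := by
    rw [pow_mul, hcn, hw, hcomm2.mul_pow, hqpow m hm]
  rw [key]
  exact inRadJ_mul_right' hrad (1 - p)

theorem stmt1 {R : Type*} [Ring R] (a b : R) (h : IsGZhouInv a b) :
    b * a * b = b ∧ inComm2 a b ∧ inSqrtJ (a - a ^ 2 * b) := by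
  obtain ⟨hbab, hc2, n, hn, m, hm, hrad⟩ := h
  refine ⟨hbab, hc2, ?_⟩
  have hab : b * a = a * b := hc2 a rfl
  have hpa : a * (a * b) = a * b * a := by conv_rhs => rw [mul_assoc, hab]
  have hpp : a * b * (a * b) = a * b := by
    calc a * b * (a * b) = a * (b * a * b) := by noncomm_ring
      _ = a * b := by rw [hbab]
  have hc : a - a ^ 2 * b = a * (1 - a * b) := by noncomm_ring
  refine ⟨n * m, Nat.mul_pos hn hm, ?_⟩
  rw [hc]
  exact main_aux a (a * b) hpa hpp n m hn hm hrad
end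

section
/- In a ring R, if there exists an idempotent p ∈ comm²(a) with a^n − p ∈ √J(R) for some n ∈ ℕ, then a has a generalized Zhou inverse; explicitly, a^{n-1}·(a^n + 1 − p)^{-1}·p is a generalized Zhou inverse of a. -/
private lemma inv_comm' {R : Type*} [Ring R] {u y : R} (hu : IsUnit u) (h : y * u = u * y) :
    y * Ring.inverse u = Ring.inverse u * y := by
  have h1 : Ring.inverse u * u = 1 := Ring.inverse_mul_cancel u hu
  have h2 : u * Ring.inverse u = 1 := Ring.mul_inverse_cancel u hu
  calc y * Ring.inverse u = (Ring.inverse u * u) * (y * Ring.inverse u) := by rw [h1, one_mul]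
    _ = Ring.inverse u * ((u * y) * Ring.inverse u) := by noncomm_ring
    _ = Ring.inverse u * ((y * u) * Ring.inverse u) := by rw [h]
    _ = Ring.inverse u * (y * (u * Ring.inverse u)) := by noncomm_ring
    _ = Ring.inverse u * y := by rw [h2, mul_one]

private lemma unit_one_add {R : Type*} [Ring R] {z : R} (h : inSqrtJ z) : IsUnit (1 + z) := by
  obtain ⟨m, hm, hr⟩ := h
  have hx : IsUnit (1 - (-z) ^ m) := by
    have e : (1 : R) - (-1 : R) ^ m * z ^ m = 1 - (-z) ^ m := by rw [← neg_pow]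
    have := hr ((-1 : R) ^ m)
    rwa [e] at this
  obtain ⟨w, hw⟩ := hx
  set S := ∑ i ∈ Finset.range m, (-z) ^ i with hS
  have hx1 : (-z) - 1 = -(1 + z) := by abel
  have h1 : (1 + z) * S = 1 - (-z) ^ m := by
    have := mul_geom_sum (x := -z) (n := m)
    rw [hx1, ← hS, neg_mul, neg_eq_iff_eq_neg] at this
    rw [this]; abel
  have h2 : S * (1 + z) = 1 - (-z) ^ m := by
    have := geom_sum_mul (x := -z) (n := m)
    rw [hx1, ← hS, mul_neg, neg_eq_iff_eq_neg] at this
    rw [this]; abel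
  have hc : (1 + z) * (S * ↑w⁻¹) = 1 := by
    rw [← mul_assoc, h1, ← hw, Units.mul_inv]
  have hc' : ((↑w⁻¹ : R) * S) * (1 + z) = 1 := by
    rw [mul_assoc, h2, ← hw, Units.inv_mul]
  have heq : (↑w⁻¹ : R) * S = S * ↑w⁻¹ := by
    calc (↑w⁻¹ : R) * S = ((↑w⁻¹ : R) * S) * ((1 + z) * (S * ↑w⁻¹)) := by rw [hc, mul_one]
      _ = (((↑w⁻¹ : R) * S) * (1 + z)) * (S * ↑w⁻¹) := by noncomm_ring
      _ = S * ↑w⁻¹ := by rw [hc', one_mul]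
  exact ⟨⟨1 + z, S * ↑w⁻¹, hc, heq ▸ hc'⟩, rfl⟩

theorem stmt4 {R : Type*} [Ring R] (a p : R) (n : ℕ) (hn : 0 < n)
    (hp : p * p = p) (hpc : inComm2 a p) (h : inSqrtJ (a ^ n - p)) :
    IsGZhouInv a (a ^ (n - 1) * Ring.inverse (a ^ n + 1 - p) * p) := by
  have hu : IsUnit (a ^ n + 1 - p) := by
    have e : a ^ n + 1 - p = 1 + (a ^ n - p) := by abel
    rw [e]; exact unit_one_add h
  set u := a ^ n + 1 - p with hudef
  set iu := Ring.inverse u with hiu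
  have hiu1 : iu * u = 1 := Ring.inverse_mul_cancel u hu
  have hiu2 : u * iu = 1 := Ring.mul_inverse_cancel u hu
  have hpa : a * p = p * a := (hpc a rfl).symm
  have hpan : ∀ k : ℕ, p * a ^ k = a ^ k * p := fun k =>
    ((Commute.pow_left (hpa : Commute a p) k).eq).symm
  have hpu : p * u = u * p := by
    rw [hudef]
    rw [mul_sub, sub_mul, mul_add, add_mul, hpan n, hp, mul_one, one_mul]
  have hpun : u * p = a ^ n * p := by
    rw [hudef, sub_mul, add_mul, hp, one_mul]; abel
  have hpiu : p * iu = iu * p := inv_comm' hu hpu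
  have hau : a * u = u * a := by
    rw [hudef, mul_sub, sub_mul, mul_add, add_mul, mul_one, one_mul, hpa, ← pow_succ, ← pow_succ']
  have haiu : a * iu = iu * a := inv_comm' hu hau
  have haniu : a ^ n * iu = iu * a ^ n := inv_comm' hu
    ((Commute.pow_left (hau : Commute a u) n).eq)
  have hkey : a ^ n * iu * p = p := by
    rw [haniu, mul_assoc, ← hpun, ← mul_assoc, hiu1, one_mul]
  have han : a * a ^ (n - 1) = a ^ n := by
    conv_rhs => rw [show n = 1 + (n - 1) by omega]
    rw [pow_add, pow_one]
  set b := a ^ (n - 1) * iu * p with hb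
  have hab : a * b = p := by
    rw [hb, ← mul_assoc, ← mul_assoc, han, hkey]
  have han' : a ^ (n - 1) * a = a ^ n := by
    conv_rhs => rw [show n = (n - 1) + 1 by omega]
    rw [pow_succ]
  have hba : b * a = p := by
    calc b * a = a ^ (n - 1) * iu * (p * a) := by rw [hb, mul_assoc]
      _ = a ^ (n - 1) * iu * (a * p) := by rw [← hpa]
      _ = a ^ (n - 1) * (iu * a) * p := by noncomm_ring
      _ = a ^ (n - 1) * (a * iu) * p := by rw [haiu]
      _ = (a ^ (n - 1) * a) * iu * p := by noncomm_ring
      _ = a ^ n * iu * p := by rw [han']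
      _ = p := hkey
  refine ⟨?_, ?_, n, hn, ?_⟩
  · rw [hba]
    calc p * b = (p * a ^ (n - 1)) * iu * p := by rw [hb]; noncomm_ring
      _ = (a ^ (n - 1) * p) * iu * p := by rw [hpan]
      _ = a ^ (n - 1) * (p * iu) * p := by noncomm_ring
      _ = a ^ (n - 1) * (iu * p) * p := by rw [hpiu]
      _ = a ^ (n - 1) * iu * (p * p) := by noncomm_ring
      _ = b := by rw [hp, hb]
  · intro y hy
    have hyp : p * y = y * p := hpc y hy
    have hyan : y * a ^ (n - 1) = a ^ (n - 1) * y :=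
      ((Commute.pow_right (hy : Commute y a) (n - 1)).eq)
    have hyu : y * u = u * y := by
      rw [hudef, mul_sub, sub_mul, mul_add, add_mul, mul_one, one_mul, hyp,
        (Commute.pow_right (hy : Commute y a) n).eq]
    have hyiu : y * iu = iu * y := inv_comm' hu hyu
    calc b * y = a ^ (n - 1) * iu * (p * y) := by rw [hb, mul_assoc]
      _ = a ^ (n - 1) * iu * (y * p) := by rw [hyp]
      _ = a ^ (n - 1) * (iu * y) * p := by noncomm_ring
      _ = a ^ (n - 1) * (y * iu) * p := by rw [← hyiu]
      _ = (a ^ (n - 1) * y) * iu * p := by noncomm_ring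
      _ = (y * a ^ (n - 1)) * iu * p := by rw [← hyan]
      _ = y * b := by rw [hb]; noncomm_ring
  · rw [hab]; exact h
end

section
/- An element a of a ring R has a generalized Zhou inverse if and only if there exists an idempotent p ∈ comm²(a) such that a^n − p ∈ √J(R) for some n ∈ ℕ. -/
/-- If some power of w lies in the Jacobson radical, then 1 + w is a unit. -/
theorem isUnit_one_add_of_sqrtJ {R : Type*} [Ring R] {w : R} (h : inSqrtJ w) :
    IsUnit (1 + w) := by
  obtain ⟨m, hm, hrad⟩ := h
  set S : R := ∑ i ∈ Finset.range m, (-w) ^ i with hS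
  have hc : IsUnit (1 - (-w) ^ m) := by
    have := hrad ((-1 : R) ^ m)
    rwa [← neg_pow] at this
  obtain ⟨v, hv⟩ := hc
  have h1 : (1 + w) * S = (v : R) := by
    rw [hv]
    have := mul_neg_geom_sum (-w) m
    rwa [sub_neg_eq_add] at this
  have h2 : S * (1 + w) = (v : R) := by
    rw [hv]
    have := geom_sum_mul_neg (-w) m
    rwa [sub_neg_eq_add] at this
  have hcw : Commute (1 + w) ((v : R)) := by
    rw [hv]
    have h0 : Commute (1 + w) (-w) :=
      (((Commute.one_left w).add_left (Commute.refl w)).neg_right)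
    exact (Commute.one_right _).sub_right (h0.pow_right m)
  have hcwi : Commute (1 + w) ((v⁻¹ : Rˣ) : R) := hcw.units_inv_right
  refine ⟨⟨1 + w, S * ((v⁻¹ : Rˣ) : R), ?_, ?_⟩, rfl⟩
  · rw [← mul_assoc, h1]
    exact v.mul_inv
  · rw [mul_assoc, ← hcwi.eq, ← mul_assoc, h2]
    exact v.mul_inv

theorem stmt5 {R : Type*} [Ring R] (a : R) :
    (∃ b : R, IsGZhouInv a b) ↔
      ∃ p : R, p * p = p ∧ inComm2 a p ∧ ∃ n : ℕ, 0 < n ∧ inSqrtJ (a ^ n - p) := by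
  constructor
  · rintro ⟨b, hbab, hbc, n, hn, hsj⟩
    have hba : b * a = a * b := hbc a rfl
    refine ⟨a * b, ?_, ?_, n, hn, hsj⟩
    · calc a * b * (a * b) = a * (b * a * b) := by
            rw [mul_assoc, ← mul_assoc b a b]
        _ = a * b := by rw [hbab]
    · intro y hy
      have hby : b * y = y * b := hbc y hy
      calc a * b * y = a * (y * b) := by rw [mul_assoc, hby]
        _ = y * a * b := by rw [← mul_assoc, ← hy]
        _ = y * (a * b) := by rw [mul_assoc]
  · rintro ⟨p, hp, hpc, n, hn, hsj⟩
    rcases n with _ | k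
    · exact absurd hn (by simp)
    set w : R := a ^ (k + 1) - p with hw
    have hpa : p * a = a * p := hpc a rfl
    have hpa' : Commute p a := hpa
    have hpan : Commute p (a ^ (k + 1)) := hpa'.pow_right _
    have hpak : Commute p (a ^ k) := hpa'.pow_right _
    have hpw : Commute p w := hpan.sub_right (Commute.refl p)
    have haw : Commute a w := ((Commute.refl a).pow_right (k + 1)).sub_right hpa'.symm
    have hu : IsUnit (1 + w) := isUnit_one_add_of_sqrtJ hsj
    set u : Rˣ := hu.unit with hu_def
    have huc : (u : R) = 1 + w := hu.unit_spec
    have hau : Commute a (u : R) := by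
      rw [huc]; exact (Commute.one_right a).add_right haw
    have haui : Commute a ((u⁻¹ : Rˣ) : R) := hau.units_inv_right
    have hpu : Commute p (u : R) := by
      rw [huc]; exact (Commute.one_right p).add_right hpw
    have hpui : Commute p ((u⁻¹ : Rˣ) : R) := hpu.units_inv_right
    have han : a ^ (k + 1) = w + p := by rw [hw, sub_add_cancel]
    have h3 : a ^ (k + 1) * p = (u : R) * p := by
      rw [huc, han, add_mul, add_mul, one_mul, hp, add_comm]
    set b : R := ((u⁻¹ : Rˣ) : R) * (p * a ^ k) with hb
    have key : a * (p * a ^ k) = (u : R) * p := by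
      rw [← mul_assoc, ← hpa, mul_assoc, ← pow_succ', hpan.eq, h3]
    have hab : a * b = p := by
      rw [hb, ← mul_assoc, haui.eq, mul_assoc, key, ← mul_assoc, u.inv_mul, one_mul]
    refine ⟨b, ?_, ?_, k + 1, hn, by rwa [hab]⟩
    · rw [mul_assoc, hab, hb, mul_assoc, mul_assoc, ← hpak.eq, ← mul_assoc p p, hp]
    · intro y hy
      have hya : Commute y a := hy
      have hyp : Commute y p := (show Commute p y from hpc y hy).symm
      have hyw : Commute y w := (hya.pow_right (k + 1)).sub_right hyp
      have hyu : Commute y (u : R) := by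
        rw [huc]; exact (Commute.one_right y).add_right hyw
      have hyui : Commute y ((u⁻¹ : Rˣ) : R) := hyu.units_inv_right
      exact ((hyui.mul_right (hyp.mul_right (hya.pow_right k))).symm).eq
end

section
/- An element a of a ring R has a generalized Zhou inverse if and only if there exists x ∈ comm²(a) such that x = xax and a − a^{n+2}x ∈ √J(R) for some n ∈ ℕ. -/
lemma unit_swap {R : Type*} [Ring R] {p q : R} (h : IsUnit (1 - p * q)) :
    IsUnit (1 - q * p) := by
  obtain ⟨u, hu⟩ := h
  set U : R := ↑u⁻¹ with hU
  have h1 : U * (1 - p * q) = 1 := by rw [hU, ← hu]; exact u.inv_mul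
  have h2 : (1 - p * q) * U = 1 := by rw [hU, ← hu]; exact u.mul_inv
  have key1 : p * q * U = U - 1 := by
    have : U - p * q * U = 1 := by rw [← h2]; noncomm_ring
    linear_combination (norm := noncomm_ring) -this
  have key2 : U * (p * q) = U - 1 := by
    have : U - U * (p * q) = 1 := by rw [← h1]; noncomm_ring
    linear_combination (norm := noncomm_ring) -this
  refine isUnit_iff_exists.mpr ⟨1 + q * U * p, ?_, ?_⟩
  · have e1 : (1 - q * p) * (1 + q * U * p) = 1 + q * U * p - q * p - q * (p * q * U) * p := by
      noncomm_ring
    rw [e1, key1]; noncomm_ring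
  · have e2 : (1 + q * U * p) * (1 - q * p) = 1 - q * p + q * U * p - q * (U * (p * q)) * p := by
      noncomm_ring
    rw [e2, key2]; noncomm_ring

lemma radJ_lmul {R : Type*} [Ring R] (c : R) {x : R} (h : inRadJ x) : inRadJ (c * x) :=
  fun y => by rw [← mul_assoc]; exact h (y * c)

lemma radJ_rmul {R : Type*} [Ring R] (c : R) {x : R} (h : inRadJ x) : inRadJ (x * c) := by
  intro y
  have h1 : IsUnit (1 - c * (y * x)) := by rw [← mul_assoc]; exact h (c * y)
  have h2 := unit_swap h1
  rwa [mul_assoc] at h2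

lemma radJ_add {R : Type*} [Ring R] {x y : R} (hx : inRadJ x) (hy : inRadJ y) :
    inRadJ (x + y) := by
  intro z
  obtain ⟨u, hu⟩ := hx z
  have h2 : IsUnit (1 - (↑u⁻¹ * z) * y) := hy (↑u⁻¹ * z)
  have key : (1 : R) - z * (x + y) = ↑u * (1 - (↑u⁻¹ * z) * y) := by
    have : (↑u : R) * (↑u⁻¹ * z * y) = z * y := by
      rw [← mul_assoc, ← mul_assoc, u.mul_inv, one_mul]
    rw [mul_sub, mul_one, this, hu]; noncomm_ring
  rw [key]
  exact u.isUnit.mul h2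

lemma add_pow_orth {R : Type*} [Ring R] {u v : R} (huv : u * v = 0) (hvu : v * u = 0) (N : ℕ) :
    (u + v) ^ (N + 1) = u ^ (N + 1) + v ^ (N + 1) := by
  induction N with
  | zero => simp
  | succ k ih =>
    have h1 : u ^ (k + 1) * v = 0 := by rw [pow_succ, mul_assoc, huv, mul_zero]
    have h2 : v ^ (k + 1) * u = 0 := by rw [pow_succ, mul_assoc, hvu, mul_zero]
    rw [pow_succ, ih, add_mul, mul_add, mul_add, h1, h2, add_zero, zero_add,
      ← pow_succ, ← pow_succ]

lemma core {R : Type*} [Ring R] {a e w c : R} (r s m : ℕ)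
    (hr : 0 < r) (hs : 0 < s) (hm : 0 < m)
    (hee : e * e = e)
    (hea : Commute e a)
    (hew : Commute e w)
    (hcw : Commute c w)
    (hce : Commute c e)
    (hwf : w * (1 - e) = a ^ r * (1 - e))
    (hJ : inRadJ (w ^ m)) :
    inRadJ ((a ^ s * (1 - e) + c * (w * e)) ^ (r * m)) := by
  set f : R := 1 - e with hfdef
  have hfe : f * e = 0 := by rw [hfdef, sub_mul, one_mul, hee, sub_self]
  have hef : e * f = 0 := by rw [hfdef, mul_sub, mul_one, hee, sub_self]
  have hff : f * f = f := by
    rw [hfdef]; linear_combination (norm := noncomm_ring) hee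
  have hfa : Commute f a := (Commute.one_left a).sub_left hea
  have hfw : Commute f w := (Commute.one_left w).sub_left hew
  have hfc : Commute f c := (Commute.one_left c).sub_left hce.symm
  have hfpow : ∀ k : ℕ, f ^ (k + 1) = f := fun k => IsIdempotentElem.pow_succ_eq k hff
  obtain ⟨s', rfl⟩ : ∃ s', s = s' + 1 := ⟨s - 1, by omega⟩
  obtain ⟨r', rfl⟩ : ∃ r', r = r' + 1 := ⟨r - 1, by omega⟩
  obtain ⟨m', rfl⟩ : ∃ m', m = m' + 1 := ⟨m - 1, by omega⟩
  obtain ⟨K, hK⟩ : ∃ K, (r' + 1) * (m' + 1) = K + 1 := ⟨r' * (m' + 1) + m', by ring⟩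
  -- the two summands
  set u : R := a ^ (s' + 1) * f with hudef
  set v : R := c * (w * e) with hvdef
  -- key power identity for a^k * f
  have hwfm : (w * f) ^ (m' + 1) = w ^ (m' + 1) * f := by
    rw [hfw.symm.mul_pow, hfpow]
  have hafm : (a ^ (r' + 1) * f) ^ (m' + 1) = a ^ ((r' + 1) * (m' + 1)) * f := by
    rw [((hfa.pow_right (r' + 1)).symm).mul_pow, hfpow, ← pow_mul]
  have hkey : a ^ ((r' + 1) * (m' + 1)) * f = w ^ (m' + 1) * f := by
    rw [← hafm, ← hwf, hwfm]
  -- u part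
  have huJ : inRadJ (u ^ ((r' + 1) * (m' + 1))) := by
    have h1 : u ^ ((r' + 1) * (m' + 1)) =
        a ^ (s' * ((r' + 1) * (m' + 1))) * (a ^ ((r' + 1) * (m' + 1)) * f) := by
      rw [hudef, ((hfa.pow_right (s' + 1)).symm).mul_pow, hK, hfpow, ← hK, ← pow_mul,
        show (s' + 1) * ((r' + 1) * (m' + 1)) = s' * ((r' + 1) * (m' + 1)) + (r' + 1) * (m' + 1)
          from by ring, pow_add, mul_assoc]
    rw [h1, hkey]
    exact radJ_lmul _ (radJ_rmul f hJ)
  -- v part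
  have hvJ : inRadJ (v ^ ((r' + 1) * (m' + 1))) := by
    have hcwe : Commute c (w * e) := hcw.mul_right hce
    have hvm : v ^ (m' + 1) = c ^ (m' + 1) * (w ^ (m' + 1) * e) := by
      rw [hvdef, hcwe.mul_pow, hew.symm.mul_pow, IsIdempotentElem.pow_succ_eq m' hee]
    have hvmJ : inRadJ (v ^ (m' + 1)) := by
      rw [hvm]; exact radJ_lmul _ (radJ_rmul e hJ)
    have h2 : v ^ ((r' + 1) * (m' + 1)) = v ^ (r' * (m' + 1)) * v ^ (m' + 1) := by
      rw [← pow_add]; ring_nf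
    rw [h2]
    exact radJ_lmul _ hvmJ
  -- orthogonality
  have huv : u * v = 0 := by
    have h1 : f * (c * (w * e)) = c * (w * (f * e)) := by
      rw [← mul_assoc, hfc.eq, mul_assoc, ← mul_assoc f w, hfw.eq, mul_assoc]
    rw [hudef, hvdef, mul_assoc, h1, hfe, mul_zero, mul_zero, mul_zero]
  have hvu : v * u = 0 := by
    have h2 : (w * e) * (a ^ (s' + 1) * f) = w * (a ^ (s' + 1) * (e * f)) := by
      rw [mul_assoc w e, ← mul_assoc e, (hea.pow_right (s' + 1)).eq, mul_assoc]
    rw [hvdef, hudef, mul_assoc, h2, hef, mul_zero, mul_zero, mul_zero]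
  rw [hK, add_pow_orth huv hvu K, ← hK]
  exact radJ_add huJ hvJ

theorem stmt6 {R : Type*} [Ring R] (a : R) :
    (∃ b : R, IsGZhouInv a b) ↔
      ∃ x : R, inComm2 a x ∧ x = x * a * x ∧
        ∃ n : ℕ, 0 < n ∧ inSqrtJ (a - a ^ (n + 2) * x) := by
  constructor
  · rintro ⟨b, hbab, hcomm, n, hn, m, hm, hJ⟩
    have hba : b * a = a * b := hcomm a rfl
    have hcba : Commute b a := hba
    have hee : (a * b) * (a * b) = a * b := by
      rw [mul_assoc, ← mul_assoc b a b, hbab]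
    have hea : Commute (a * b) a := (Commute.refl a).mul_left hcba
    have hew : Commute (a * b) (a ^ n - a * b) :=
      (hea.pow_right n).sub_right (Commute.refl _)
    have hcaw : Commute a (a ^ n - a * b) :=
      ((Commute.refl a).pow_right n).sub_right hea.symm
    have hcw : Commute (-a) (a ^ n - a * b) := hcaw.neg_left
    have hce : Commute (-a) (a * b) := hea.symm.neg_left
    have hwf : (a ^ n - a * b) * (1 - a * b) = a ^ n * (1 - a * b) := by
      have hef0 : (a * b) * (1 - a * b) = 0 := by
        rw [mul_sub, mul_one, hee, sub_self]
      rw [sub_mul, hef0, sub_zero]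
    have hcore := core (a := a) (e := a * b) (w := a ^ n - a * b) (c := -a)
      n 1 m hn one_pos hm hee hea hew hcw hce hwf hJ
    have h1 : a * (a ^ n * (a * b)) = a ^ (n + 2) * b := by
      rw [← mul_assoc, ← pow_succ', ← mul_assoc, ← pow_succ]
    have hElt : a ^ 1 * (1 - a * b) + (-a) * ((a ^ n - a * b) * (a * b)) =
        a - a ^ (n + 2) * b := by
      rw [sub_mul, hee, pow_one, neg_mul, mul_sub a (a ^ n * (a * b)) (a * b), h1]
      noncomm_ring
    exact ⟨b, hcomm, hbab.symm, n, hn, n * m, Nat.mul_pos hn hm, by rw [← hElt]; exact hcore⟩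
  · rintro ⟨x, hcomm, hx, n, hn, m, hm, hJ⟩
    have hxa : x * a = a * x := hcomm a rfl
    have hcxa : Commute x a := hxa
    have hxax : x * a * x = x := hx.symm
    have hxe : x * (a * x) = x := by rw [← mul_assoc]; exact hxax
    have hee : (a * x) * (a * x) = a * x := by
      rw [mul_assoc, ← mul_assoc x a x, hxax]
    have hea : Commute (a * x) a := (Commute.refl a).mul_left hcxa
    have hex : Commute (a * x) x := hcxa.symm.mul_left (Commute.refl x)
    have hew : Commute (a * x) (a - a ^ (n + 2) * x) :=
      hea.sub_right ((hea.pow_right (n + 2)).mul_right hex)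
    have hcw : Commute (-x) (a - a ^ (n + 2) * x) :=
      (hcxa.sub_right ((hcxa.pow_right (n + 2)).mul_right (Commute.refl x))).neg_left
    have hce : Commute (-x) (a * x) := hex.symm.neg_left
    have hxf0 : x * (1 - a * x) = 0 := by rw [mul_sub, mul_one, hxe, sub_self]
    have hwf : (a - a ^ (n + 2) * x) * (1 - a * x) = a ^ 1 * (1 - a * x) := by
      rw [sub_mul, mul_assoc (a ^ (n + 2)) x (1 - a * x), hxf0, mul_zero, sub_zero, pow_one]
    have hcore := core (a := a) (e := a * x) (w := a - a ^ (n + 2) * x) (c := -x)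
      1 n m one_pos hn hm hee hea hew hcw hce hwf hJ
    -- element identity
    have hwe : (a - a ^ (n + 2) * x) * (a * x) = a * (a * x) - a ^ (n + 2) * x := by
      rw [sub_mul, mul_assoc (a ^ (n + 2)) x (a * x), hxe]
    have h2 : x * (a * (a * x)) = a * x := by
      rw [← mul_assoc, hxa, hee]
    have hexx : (a * x) * x = x := by rw [← hxa]; exact hxax
    have h3 : x * (a ^ (n + 2) * x) = a ^ n * (a * x) := by
      rw [← mul_assoc, (hcxa.pow_right (n + 2)).eq, pow_succ a (n + 1),
        mul_assoc (a ^ (n + 1)) a x, mul_assoc (a ^ (n + 1)) (a * x) x, hexx,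
        pow_succ a n, mul_assoc]
    have hxwe : x * ((a - a ^ (n + 2) * x) * (a * x)) = a * x - a ^ n * (a * x) := by
      rw [hwe, mul_sub, h2, h3]
    have hElt : a ^ n * (1 - a * x) + (-x) * ((a - a ^ (n + 2) * x) * (a * x)) =
        a ^ n - a * x := by
      rw [neg_mul, hxwe, mul_sub, mul_one]
      noncomm_ring
    refine ⟨x, hxax, hcomm, n, hn, 1 * m, by omega, by rw [← hElt]; exact hcore⟩
end

section
/- In a ring R, an element a has at most one generalized Zhou inverse: if b and b' both satisfy bab = b, b ∈ comm²(a), a^n − ab ∈ √J(R) and b'ab' = b', b' ∈ comm²(a), a^m − ab' ∈ √J(R), then b = b'. -/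
private lemma aux_zhou {S R : Type*} [CommRing S] [Ring R] (φ : S →+* R)
    (hφ : Function.Injective φ) (A B B' : S)
    (hB : B * A * B = B) (hB' : B' * A * B' = B')
    (m k : ℕ) (hm : 0 < m) (hk : 0 < k)
    (hu : ∀ y : R, IsUnit (1 - y * φ ((A ^ m - A * B') ^ k))) :
    A * B * (1 - A * B') = 0 := by
  have hEE : (A * B) * (A * B) = A * B := by linear_combination A * hB
  have hFF : (A * B') * (A * B') = A * B' := by linear_combination A * hB'
  obtain ⟨m', rfl⟩ := Nat.exists_eq_succ_of_ne_zero hm.ne'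
  have hEm : (A * B) ^ (m' + 1) = A * B := IsIdempotentElem.pow_succ_eq m' hEE
  have hG : A * B * (1 - A * B') =
      (B ^ (m' + 1) * (1 - A * B')) * (A ^ (m' + 1) - A * B') := by
    have h1 : (A * B) ^ (m' + 1) * (1 - A * B') = A * B * (1 - A * B') := by
      rw [hEm]
    linear_combination (-1 : S) * h1 - B ^ (m' + 1) * hFF
  have hGG : (A * B * (1 - A * B')) * (A * B * (1 - A * B')) = A * B * (1 - A * B') := by
    linear_combination (1 - A * B') * (1 - A * B') * hEE + (A * B) * hFF
  obtain ⟨k', rfl⟩ := Nat.exists_eq_succ_of_ne_zero hk.ne'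
  have key : A * B * (1 - A * B') =
      (B ^ (m' + 1) * (1 - A * B')) ^ (k' + 1) * (A ^ (m' + 1) - A * B') ^ (k' + 1) := by
    rw [← mul_pow, ← hG, IsIdempotentElem.pow_succ_eq k' hGG]
  have h0S : (A * B * (1 - A * B')) *
      (1 - (B ^ (m' + 1) * (1 - A * B')) ^ (k' + 1) * (A ^ (m' + 1) - A * B') ^ (k' + 1)) = 0 := by
    linear_combination (A * B * (1 - A * B')) * key - hGG
  have h0R : φ (A * B * (1 - A * B')) *
      (1 - φ ((B ^ (m' + 1) * (1 - A * B')) ^ (k' + 1)) * φ ((A ^ (m' + 1) - A * B') ^ (k' + 1)))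
        = 0 := by
    rw [← map_one φ, ← map_mul, ← map_sub, ← map_mul, h0S, map_zero]
  obtain ⟨u, hv⟩ := hu (φ ((B ^ (m' + 1) * (1 - A * B')) ^ (k' + 1)))
  have hz : φ (A * B * (1 - A * B')) = 0 := by
    have := congrArg (· * (↑u⁻¹ : R)) (hv ▸ h0R)
    simpa [mul_assoc] using this
  have := hφ (hz.trans (map_zero φ).symm)
  exact this

set_option maxHeartbeats 1000000 in
theorem stmt7 {R : Type*} [Ring R] (a b b' : R)
    (h : IsGZhouInv a b) (h' : IsGZhouInv a b') : b = b' := by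
  obtain ⟨hbab, hbc2, n, hn, kn, hkn, hrn⟩ := h
  obtain ⟨hb'ab', hb'c2, m, hm, km, hkm, hrm⟩ := h'
  have hba : b * a = a * b := hbc2 a rfl
  have hb'a : b' * a = a * b' := hb'c2 a rfl
  have hb'b : b' * b = b * b' := hb'c2 b hba
  have hcomm : ∀ x ∈ ({a, b, b'} : Set R), ∀ y ∈ ({a, b, b'} : Set R), x * y = y * x := by
    rintro x (rfl | rfl | rfl) y (rfl | rfl | rfl) <;> simp only [hba, hb'a, hb'b]
  letI : CommRing (Subring.closure ({a, b, b'} : Set R)) := Subring.closureCommRingOfComm hcomm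
  have haS : a ∈ Subring.closure ({a, b, b'} : Set R) := Subring.subset_closure (by simp)
  have hbS : b ∈ Subring.closure ({a, b, b'} : Set R) := Subring.subset_closure (by simp)
  have hb'S : b' ∈ Subring.closure ({a, b, b'} : Set R) := Subring.subset_closure (by simp)
  have φinj : Function.Injective ((Subring.closure ({a, b, b'} : Set R)).subtype) :=
    Subtype.coe_injective
  have hB : (⟨b, hbS⟩ * ⟨a, haS⟩ * ⟨b, hbS⟩ : Subring.closure ({a, b, b'} : Set R)) = ⟨b, hbS⟩ :=
    Subtype.ext (by exact hbab)
  have hB' : (⟨b', hb'S⟩ * ⟨a, haS⟩ * ⟨b', hb'S⟩ : Subring.closure ({a, b, b'} : Set R))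
      = ⟨b', hb'S⟩ := Subtype.ext (by exact hb'ab')
  have hu1 : ∀ y : R, IsUnit (1 - y * (Subring.closure ({a, b, b'} : Set R)).subtype
      (((⟨a, haS⟩ : Subring.closure ({a, b, b'} : Set R)) ^ m - ⟨a, haS⟩ * ⟨b', hb'S⟩) ^ km)) := by
    intro y
    have hq : (Subring.closure ({a, b, b'} : Set R)).subtype
        (((⟨a, haS⟩ : Subring.closure ({a, b, b'} : Set R)) ^ m - ⟨a, haS⟩ * ⟨b', hb'S⟩) ^ km)
        = (a ^ m - a * b') ^ km := by
      simp only [map_pow, map_sub, map_mul]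
      rfl
    rw [hq]; exact hrm y
  have hu2 : ∀ y : R, IsUnit (1 - y * (Subring.closure ({a, b, b'} : Set R)).subtype
      (((⟨a, haS⟩ : Subring.closure ({a, b, b'} : Set R)) ^ n - ⟨a, haS⟩ * ⟨b, hbS⟩) ^ kn)) := by
    intro y
    have hq : (Subring.closure ({a, b, b'} : Set R)).subtype
        (((⟨a, haS⟩ : Subring.closure ({a, b, b'} : Set R)) ^ n - ⟨a, haS⟩ * ⟨b, hbS⟩) ^ kn)
        = (a ^ n - a * b) ^ kn := by
      simp only [map_pow, map_sub, map_mul]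
      rfl
    rw [hq]; exact hrn y
  have h1 : (⟨a, haS⟩ * ⟨b, hbS⟩ : Subring.closure ({a, b, b'} : Set R))
      * (1 - ⟨a, haS⟩ * ⟨b', hb'S⟩) = 0 := by
    exact aux_zhou _ φinj _ _ _ hB hB' m km hm hkm hu1
  have h2 : (⟨a, haS⟩ * ⟨b', hb'S⟩ : Subring.closure ({a, b, b'} : Set R))
      * (1 - ⟨a, haS⟩ * ⟨b, hbS⟩) = 0 := by
    exact aux_zhou _ φinj _ _ _ hB' hB n kn hn hkn hu2
  have hEF : (⟨a, haS⟩ * ⟨b, hbS⟩ : Subring.closure ({a, b, b'} : Set R)) = ⟨a, haS⟩ * ⟨b', hb'S⟩ := by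
    linear_combination h1 - h2
  have hBB' : (⟨b, hbS⟩ : Subring.closure ({a, b, b'} : Set R)) = ⟨b', hb'S⟩ := by
    linear_combination -hB + hB' + ((⟨b, hbS⟩ : Subring.closure ({a, b, b'} : Set R)) + ⟨b', hb'S⟩) * hEF
  exact congrArg Subtype.val hBB'
end

section
/- In a ring R, if a has a generalized Zhou inverse, then there is a unique idempotent p ∈ comm²(a) with a^n − p ∈ √J(R) for some n: if p, q are idempotents in comm²(a) with a^n − p ∈ √J(R) and a^m − q ∈ √J(R), then p = q. -/
section Aux

variable {R : Type*} [Ring R]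

/-- 1 - ab unit implies 1 - ba unit. -/
lemma aux_unit_swap {a b : R} (h : IsUnit (1 - a * b)) : IsUnit (1 - b * a) := by
  obtain ⟨u, hu⟩ := h
  refine isUnit_iff_exists.mpr ⟨1 + b * ↑u⁻¹ * a, ?_, ?_⟩
  · have h1 : (1 - a * b) * ↑u⁻¹ = 1 := by rw [← hu]; exact u.mul_inv
    have h2 : (↑u⁻¹ : R) - a * b * ↑u⁻¹ = 1 := by rwa [sub_mul, one_mul] at h1
    have : (1 - b * a) * (1 + b * ↑u⁻¹ * a) =
        1 - b * a + b * ((↑u⁻¹ : R) - a * b * ↑u⁻¹) * a := by noncomm_ring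
    rw [this, h2]; noncomm_ring
  · have h1 : (↑u⁻¹ : R) * (1 - a * b) = 1 := by rw [← hu]; exact u.inv_mul
    have h2 : (↑u⁻¹ : R) - ↑u⁻¹ * (a * b) = 1 := by rwa [mul_sub, mul_one] at h1
    have : (1 + b * ↑u⁻¹ * a) * (1 - b * a) =
        1 - b * a + b * ((↑u⁻¹ : R) - ↑u⁻¹ * (a * b)) * a := by noncomm_ring
    rw [this, h2]; noncomm_ring

lemma radJ_zero : inRadJ (0 : R) := fun y => by simp

lemma radJ_mul_left (c : R) {x : R} (h : inRadJ x) : inRadJ (c * x) := fun y => by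
  rw [← mul_assoc]; exact h (y * c)

lemma radJ_mul_right (c : R) {x : R} (h : inRadJ x) : inRadJ (x * c) := fun y => by
  have h1 : IsUnit (1 - c * (y * x)) := by have := h (c * y); rwa [mul_assoc] at this
  have h2 := aux_unit_swap h1
  rwa [mul_assoc] at h2

lemma radJ_add_s8 {x z : R} (hx : inRadJ x) (hz : inRadJ z) : inRadJ (x + z) := fun y => by
  obtain ⟨u, hu⟩ := hz y
  have key : (1 - y * z) * (1 - ↑u⁻¹ * y * x) = 1 - y * (x + z) := by
    have h1 : (1 - y * z) * ↑u⁻¹ = 1 := by rw [← hu]; exact u.mul_inv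
    calc (1 - y * z) * (1 - ↑u⁻¹ * y * x)
        = (1 - y * z) - ((1 - y * z) * ↑u⁻¹) * (y * x) := by noncomm_ring
      _ = (1 - y * z) - 1 * (y * x) := by rw [h1]
      _ = 1 - y * (x + z) := by noncomm_ring
  rw [← key]
  exact (hz y).mul (hx (↑u⁻¹ * y))

lemma radJ_sum {ι : Type*} (s : Finset ι) (f : ι → R) (h : ∀ i ∈ s, inRadJ (f i)) :
    inRadJ (∑ i ∈ s, f i) := by
  classical
  induction s using Finset.induction_on with
  | empty => simpa using (radJ_zero : inRadJ (0 : R))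
  | insert _ _ hi ih =>
    rw [Finset.sum_insert hi]
    exact radJ_add_s8 (h _ (Finset.mem_insert_self _ _))
      (ih fun i his => h i (Finset.mem_insert_of_mem his))

lemma radJ_add_pow {x y : R} (h : Commute x y) {j k : ℕ}
    (hx : inRadJ (x ^ j)) (hy : inRadJ (y ^ k)) : inRadJ ((x + y) ^ (j + k)) := by
  rw [h.add_pow]
  apply radJ_sum
  intro i _
  by_cases hij : j ≤ i
  · have : x ^ i = x ^ j * x ^ (i - j) := by rw [← pow_add, Nat.add_sub_cancel' hij]
    rw [this, mul_assoc, mul_assoc]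
    exact radJ_mul_right _ hx
  · have hk : k ≤ j + k - i := by omega
    have : y ^ (j + k - i) = y ^ k * y ^ (j + k - i - k) := by
      rw [← pow_add, Nat.add_sub_cancel' hk]
    rw [this]
    have : x ^ i * (y ^ k * y ^ (j + k - i - k)) * (↑((j + k).choose i) : R) =
        x ^ i * (y ^ k * (y ^ (j + k - i - k) * (↑((j + k).choose i) : R))) := by
      noncomm_ring
    rw [this]
    exact radJ_mul_left _ (radJ_mul_right _ hy)

lemma sqrtJ_add {x y : R} (h : Commute x y) (hx : inSqrtJ x) (hy : inSqrtJ y) :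
    inSqrtJ (x + y) := by
  obtain ⟨j, hj, hxj⟩ := hx
  obtain ⟨k, hk, hyk⟩ := hy
  exact ⟨j + k, by omega, radJ_add_pow h hxj hyk⟩

lemma sqrtJ_mul_left {x c : R} (h : Commute c x) (hx : inSqrtJ x) : inSqrtJ (c * x) := by
  obtain ⟨m, hm, hr⟩ := hx
  exact ⟨m, hm, by rw [h.mul_pow]; exact radJ_mul_left _ hr⟩

lemma sqrtJ_neg {x : R} (hx : inSqrtJ x) : inSqrtJ (-x) := by
  have := sqrtJ_mul_left (Commute.neg_one_left x) hx
  simpa using this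

lemma sqrtJ_pow_sub_pow {x y : R} (h : Commute x y) (hs : inSqrtJ (x - y)) (m : ℕ) :
    inSqrtJ (x ^ m - y ^ m) := by
  rw [← h.geom_sum₂_mul]
  have hc : Commute (∑ i ∈ Finset.range m, x ^ i * y ^ (m - 1 - i)) (x - y) := by
    apply Commute.sum_left
    intro i _
    exact (((Commute.refl x).pow_left i).mul_left ((h.symm.pow_left _))).sub_right
      (((h.pow_left i).mul_left ((Commute.refl y).pow_left _)))
  exact sqrtJ_mul_left hc hs

end Aux

theorem stmt8 {R : Type*} [Ring R] (a p q : R)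
    (ha : ∃ b : R, IsGZhouInv a b)
    (hp : p * p = p) (hpc : inComm2 a p) (hq : q * q = q) (hqc : inComm2 a q)
    (hn : ∃ n : ℕ, 0 < n ∧ inSqrtJ (a ^ n - p))
    (hm : ∃ m : ℕ, 0 < m ∧ inSqrtJ (a ^ m - q)) : p = q := by
  clear ha
  obtain ⟨n, hn0, hns⟩ := hn
  obtain ⟨m, hm0, hms⟩ := hm
  have hpa : p * a = a * p := hpc a rfl
  have hqa : q * a = a * q := hqc a rfl
  have hpq : p * q = q * p := hpc q hqa
  have cap : Commute a p := hpa.symm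
  have caq : Commute a q := hqa.symm
  -- idempotent powers
  have pow_idem : ∀ (e : R), e * e = e → ∀ k : ℕ, 0 < k → e ^ k = e := by
    intro e he k hk
    induction k with
    | zero => omega
    | succ j ih =>
      rcases Nat.eq_zero_or_pos j with hj | hj
      · subst hj; simp
      · rw [pow_succ, ih hj, he]
  -- a^(n*m) - p and a^(n*m) - q are in √J
  have h1 : inSqrtJ (a ^ (n * m) - p) := by
    have := sqrtJ_pow_sub_pow ((cap.pow_left n).symm.symm) hns m
    rwa [← pow_mul, pow_idem p hp m hm0] at this
  have h2 : inSqrtJ (a ^ (n * m) - q) := by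
    have := sqrtJ_pow_sub_pow ((caq.pow_left m).symm.symm) hms n
    rwa [← pow_mul, pow_idem q hq n hn0, mul_comm m n] at this
  -- p - q ∈ √J
  have hcomm12 : Commute (a ^ (n * m) - q) (-(a ^ (n * m) - p)) := by
    have c1 : Commute (a ^ (n * m)) p := cap.pow_left _
    have c2 : Commute (a ^ (n * m)) q := caq.pow_left _
    have cqp : Commute q p := hpq.symm
    exact (((Commute.refl _).sub_right c1).sub_left (c2.symm.sub_right cqp)).neg_right
  have hdm : inSqrtJ (p - q) := by
    have := sqrtJ_add hcomm12 h2 (sqrtJ_neg h1)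
    have heq : (a ^ (n * m) - q) + -(a ^ (n * m) - p) = p - q := by abel
    rwa [heq] at this
  -- d = p - q satisfies d^3 = d
  set d := p - q with hd
  have e1 : p * (p * q) = p * q := by rw [← mul_assoc, hp]
  have e2 : q * (p * q) = p * q := by rw [← mul_assoc, ← hpq, mul_assoc, hq]
  have h2sq : d * d = p + q - (p * q + p * q) := by
    rw [hd, sub_mul, mul_sub, mul_sub, hp, hq, ← hpq]
    abel
  have hd3 : d * (d * d) = d := by
    rw [h2sq]
    conv_lhs => rw [hd]
    rw [sub_mul, mul_sub, mul_sub, mul_add, mul_add, mul_add, mul_add, hp, hq, e1, e2, ← hpq]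
    rw [hd]; abel
  -- d^(2j+1) = d
  have hodd : ∀ j : ℕ, d ^ (2 * j + 1) = d := by
    intro j
    induction j with
    | zero => simp
    | succ i ih =>
      have h21 : 2 * (i + 1) + 1 = (2 * i + 1) + 2 := by omega
      rw [h21, pow_add, ih, sq]
      exact hd3
  -- d ∈ J
  obtain ⟨k, hk0, hrk⟩ := hdm
  have hdJ : inRadJ d := by
    have : d ^ (2 * k + 1) = d ^ k * d ^ (k + 1) := by rw [← pow_add]; congr 1; omega
    have h' : inRadJ (d ^ k * d ^ (k + 1)) := radJ_mul_right _ hrk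
    rwa [← this, hodd k] at h'
  -- finish: d * (1 - d*d) = 0 and 1 - d*d is a unit
  have hu : IsUnit (1 - d * d) := hdJ d
  obtain ⟨u, huu⟩ := hu
  have hzero : d * (1 - d * d) = 0 := by
    rw [mul_sub, mul_one, hd3, sub_self]
  have : d = 0 := by
    have : d = d * (1 - d * d) * ↑u⁻¹ := by
      rw [← huu, mul_assoc, u.mul_inv, mul_one]
    rw [this, hzero, zero_mul]
  have := sub_eq_zero.mp this
  exact this
end

section
/- If (ab)^k has a generalized Zhou inverse for some k ∈ ℕ, then (ba)^k has a generalized Zhou inverse. -/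
lemma my_unit_swap {R : Type*} [Ring R] (x y : R) (h : IsUnit (1 - x * y)) :
    IsUnit (1 - y * x) := by
  refine ⟨⟨1 - y * x, 1 + y * h.unit.inv * x, ?_, ?_⟩, rfl⟩
  · calc
      (1 - y * x) * (1 + y * (IsUnit.unit h).inv * x) =
          1 - y * x + y * ((1 - x * y) * h.unit.inv) * x := by noncomm_ring
      _ = 1 := by simp only [Units.inv_eq_val_inv, IsUnit.mul_val_inv, mul_one, sub_add_cancel]
  · calc
      (1 + y * (IsUnit.unit h).inv * x) * (1 - y * x) =
          1 - y * x + y * (h.unit.inv * (1 - x * y)) * x := by noncomm_ring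
      _ = 1 := by simp only [Units.inv_eq_val_inv, IsUnit.val_inv_mul, mul_one, sub_add_cancel]

lemma my_pow_swap {R : Type*} [Ring R] (a b : R) (j : ℕ) :
    (b * a) ^ (j + 1) = b * ((a * b) ^ j * a) := by
  induction j with
  | zero => simp
  | succ j ih =>
    rw [pow_succ, ih, pow_succ]
    simp only [mul_assoc]

lemma my_sandwich {R : Type*} [Ring R] (a b q : R) (m : ℕ) :
    (b * (q * a)) ^ (m + 1) = b * ((q * (a * b)) ^ m * (q * a)) := by
  induction m with
  | zero => simp
  | succ m ih =>
    rw [pow_succ, ih, pow_succ]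
    simp only [mul_assoc]

lemma my_cline {R : Type*} [Ring R] (a b x : R) (hx : IsGZhouInv (a * b) x) :
    IsGZhouInv (b * a) (b * (x * x) * a) := by
  obtain ⟨hinv, hcomm, n, hn, hsq⟩ := hx
  -- basic commutation facts
  have hxα : x * (a * b) = (a * b) * x := hcomm (a * b) rfl
  have hxxα : x * x * (a * b) = x := by
    rw [mul_assoc, hxα, ← mul_assoc]; exact hinv
  have hαxx : (a * b) * (x * x) = x := by
    rw [← mul_assoc, ← hxα]; exact hinv
  -- parametrized (right-associated) versions
  have hA : ∀ t : R, a * (b * (x * (x * t))) = x * t := by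
    intro t
    have := congrArg (· * t) hαxx
    simpa [mul_assoc] using this
  have hB : ∀ t : R, x * (x * (a * (b * t))) = x * t := by
    intro t
    have := congrArg (· * t) hxxα
    simpa [mul_assoc] using this
  have hC : ∀ t : R, x * (a * (b * t)) = a * (b * (x * t)) := by
    intro t
    have := congrArg (· * t) hxα
    simpa [mul_assoc] using this
  refine ⟨?_, ?_, ?_⟩
  · -- y * (b*a) * y = y
    show b * (x * x) * a * (b * a) * (b * (x * x) * a) = b * (x * x) * a
    simp only [mul_assoc]
    rw [hA a, hB (x * a)]
  · -- double commutant condition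
    intro z hz
    have hZ : ∀ t : R, z * (b * (a * t)) = b * (a * (z * t)) := by
      intro t
      have := congrArg (· * t) hz
      simpa [mul_assoc] using this
    have hv : x * (a * z * b) = (a * z * b) * x := by
      apply hcomm
      calc (a * z * b) * (a * b) = a * (z * (b * (a * b))) := by simp only [mul_assoc]
        _ = a * (b * (a * (z * b))) := by rw [hZ b]
        _ = (a * b) * (a * z * b) := by simp only [mul_assoc]
    have hV : ∀ t : R, x * (a * (z * (b * t))) = a * (z * (b * (x * t))) := by
      intro t
      have := congrArg (· * t) hv
      simpa [mul_assoc] using this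
    have key : ∀ t : R, b * (x * (x * (a * (z * t)))) = z * (b * (x * (x * (a * t)))) := by
      intro t
      rw [← hA (x * (a * (z * t))), ← hC, ← hC, ← hC, ← hZ, hV, hV, hV, ← hZ, hA]
    calc b * (x * x) * a * z = b * (x * (x * (a * z))) := by simp only [mul_assoc]
      _ = z * (b * (x * (x * a))) := by simpa using key 1
      _ = z * (b * (x * x) * a) := by simp only [mul_assoc]
  · -- the radical condition
    obtain ⟨m, hm, hrad⟩ := hsq
    obtain ⟨n', rfl⟩ : ∃ n', n = n' + 1 := ⟨n - 1, (Nat.succ_pred_eq_of_pos hn).symm⟩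
    set α : R := a * b with hαdef
    set c : R := α ^ (n' + 1) - α * x with hcdef
    set s : R := α ^ n' + x with hsdef
    have hxαc : Commute x α := hxα
    have hxpow : ∀ j : ℕ, x * α ^ j = α ^ j * x := fun j => (hxαc.pow_right j).eq
    have hqs : c * s = α ^ (2 * n' + 1) - x := by
      have h1 : (α * x) * α ^ n' = α ^ (n' + 1) * x := by
        rw [mul_assoc, hxpow n', ← mul_assoc, ← pow_succ']
      have h2 : (α * x) * x = x := by rw [mul_assoc]; exact hαxx
      have h3 : α ^ (n' + 1) * α ^ n' = α ^ (2 * n' + 1) := by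
        rw [← pow_add]; congr 1; omega
      rw [hcdef, hsdef, sub_mul, mul_add, mul_add, h1, h2, h3]
      abel
    have hcα : Commute c α :=
      (((Commute.refl α).pow_left (n' + 1)).sub_left ((Commute.refl α).mul_left hxαc))
    have hsα : Commute s α := ((Commute.refl α).pow_left n').add_left hxαc
    have hqα : Commute (c * s) α := hcα.mul_left hsα
    have hcx : Commute x c :=
      (hxαc.pow_right (n' + 1)).sub_right (hxαc.mul_right (Commute.refl x))
    have hcs : Commute c s := (hcα.pow_right n').add_right hcx.symm
    refine ⟨2 * n' + 1 + 1, by omega, m + 1, by omega, ?_⟩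
    have e2 : (b * a) * (b * (x * x) * a) = b * (x * a) := by
      simp only [mul_assoc]
      rw [hA a]
    have hX : (b * a) ^ (2 * n' + 1 + 1) - (b * a) * (b * (x * x) * a) = b * ((c * s) * a) := by
      rw [my_pow_swap a b (2 * n' + 1), e2, hqs, ← hαdef, sub_mul, mul_sub]
    rw [hX]
    intro w
    have hpow : (b * ((c * s) * a)) ^ (m + 1) =
        b * (c ^ m * (s ^ m * (α ^ m * ((c * s) * a)))) := by
      rw [my_sandwich a b (c * s) m, ← hαdef, hqα.mul_pow, hcs.mul_pow]
      simp only [mul_assoc]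
    rw [hpow]
    have h5 := hrad ((s ^ m * (α ^ m * ((c * s) * a))) * (w * b))
    have h6 : IsUnit (1 - c ^ m * ((s ^ m * (α ^ m * ((c * s) * a))) * (w * b))) :=
      my_unit_swap _ _ h5
    have h7 : IsUnit (1 - (c ^ m * (s ^ m * (α ^ m * ((c * s) * a)))) * (w * b)) := by
      rw [mul_assoc]; exact h6
    have h8 := my_unit_swap _ _ h7
    simpa only [mul_assoc] using h8

theorem stmt12 {R : Type*} [Ring R] (a b : R) (k : ℕ) (hk : 0 < k)
    (h : ∃ x : R, IsGZhouInv ((a * b) ^ k) x) :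
    ∃ y : R, IsGZhouInv ((b * a) ^ k) y := by
  obtain ⟨x, hx⟩ := h
  obtain ⟨k', rfl⟩ : ∃ k', k = k' + 1 := ⟨k - 1, (Nat.succ_pred_eq_of_pos hk).symm⟩
  have h1 : (a * b) ^ (k' + 1) = a * (b * (a * b) ^ k') := by
    rw [pow_succ']; simp only [mul_assoc]
  have h2 : (b * (a * b) ^ k') * a = (b * a) ^ (k' + 1) := by
    rw [my_pow_swap a b k', mul_assoc]
  rw [h1] at hx
  have := my_cline a (b * (a * b) ^ k') x hx
  rw [h2] at this
  exact ⟨_, this⟩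
end

section
/- Jacobson's Lemma for generalized Zhou inverses: let a,b,c,d ∈ R satisfy bdb = bac and dbd = acd. If 1 − ac has a generalized Zhou inverse, then 1 − bd has a generalized Zhou inverse. -/
section GZhouHelpers

variable {R : Type*} [Ring R]

/-- If `g` commutes with `w` and `s` is a two-sided inverse of `w`, then `g` commutes with `s`. -/
private lemma gz_commute_of_inv {s w g : R} (hs1 : s * w = 1) (hs2 : w * s = 1)
    (h : g * w = w * g) : g * s = s * g := by
  calc g * s = (s*w)*(g*s) := by rw [hs1, one_mul]
    _ = s*((w*g)*s) := by noncomm_ring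
    _ = s*((g*w)*s) := by rw [h]
    _ = (s*g)*(w*s) := by noncomm_ring
    _ = s*g := by rw [hs2, mul_one]

/-- Jacobson's lemma for units. -/
private lemma gz_unit_swap {u v : R} (h : IsUnit (1 - u * v)) : IsUnit (1 - v * u) := by
  obtain ⟨w, hw⟩ := h
  have h1 : (1 - u*v) * (↑w⁻¹ : R) = 1 := by rw [← hw]; exact w.mul_inv
  have h2 : (↑w⁻¹ : R) * (1 - u*v) = 1 := by rw [← hw]; exact w.inv_mul
  have e1 : u*v*(↑w⁻¹ : R) = ↑w⁻¹ - 1 := by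
    have : (↑w⁻¹ : R) - u*v*↑w⁻¹ = 1 := by
      calc (↑w⁻¹ : R) - u*v*↑w⁻¹ = (1 - u*v) * ↑w⁻¹ := by noncomm_ring
        _ = 1 := h1
    calc u*v*(↑w⁻¹ : R) = ↑w⁻¹ - (↑w⁻¹ - u*v*↑w⁻¹) := by noncomm_ring
      _ = ↑w⁻¹ - 1 := by rw [this]
  have e2 : (↑w⁻¹ : R)*(u*v) = ↑w⁻¹ - 1 := by
    have : (↑w⁻¹ : R) - ↑w⁻¹*(u*v) = 1 := by
      calc (↑w⁻¹ : R) - ↑w⁻¹*(u*v) = ↑w⁻¹ * (1 - u*v) := by noncomm_ring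
        _ = 1 := h2
    calc (↑w⁻¹ : R)*(u*v) = ↑w⁻¹ - (↑w⁻¹ - ↑w⁻¹*(u*v)) := by noncomm_ring
      _ = ↑w⁻¹ - 1 := by rw [this]
  refine isUnit_iff_exists.mpr ⟨1 + v*↑w⁻¹*u, ?_, ?_⟩
  · calc (1 - v*u) * (1 + v*↑w⁻¹*u)
        = 1 + v*↑w⁻¹*u - v*u - v*(u*v*↑w⁻¹)*u := by noncomm_ring
      _ = 1 + v*↑w⁻¹*u - v*u - v*((↑w⁻¹ : R) - 1)*u := by rw [e1]
      _ = 1 := by noncomm_ring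
  · calc (1 + v*↑w⁻¹*u) * (1 - v*u)
        = 1 + v*↑w⁻¹*u - v*u - v*(↑w⁻¹*(u*v))*u := by noncomm_ring
      _ = 1 + v*↑w⁻¹*u - v*u - v*((↑w⁻¹ : R) - 1)*u := by rw [e2]
      _ = 1 := by noncomm_ring

/-- The Jacobson radical is a two-sided ideal (multiplication stability). -/
private lemma gz_radJ_mul {j : R} (h : inRadJ j) (r w : R) : inRadJ (r * j * w) := by
  intro y
  have h0 : IsUnit (1 - (w*y*r)*j) := h (w*y*r)
  have h0' : IsUnit (1 - w*(y*r*j)) := by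
    have e : (1:R) - w*(y*r*j) = 1 - (w*y*r)*j := by noncomm_ring
    rw [e]; exact h0
  have h1 : IsUnit (1 - (y*r*j)*w) := gz_unit_swap h0'
  have e2 : (1:R) - y*(r*j*w) = 1 - (y*r*j)*w := by noncomm_ring
  rw [e2]; exact h1

/-- If some power of `j` lies in the Jacobson radical, then `1 - j` is a unit. -/
private lemma gz_radJ_unit {j : R} {K : ℕ} (_hK : K ≠ 0) (h : inRadJ (j ^ K)) :
    IsUnit (1 - j) := by
  have hu : IsUnit (1 - j^K) := by
    have := h 1; rwa [one_mul] at this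
  obtain ⟨w, hw⟩ := hu
  have cjw : (1 - j) * (1 - j^K) = (1 - j^K) * (1 - j) := by
    have cc : j*(j^K) = (j^K)*j := ((Commute.refl j).pow_right K).eq
    calc (1-j)*(1-j^K) = 1 - j^K - j + j*j^K := by noncomm_ring
      _ = 1 - j^K - j + j^K*j := by rw [cc]
      _ = (1-j^K)*(1-j) := by noncomm_ring
  have hwinv1 : (1 - j^K) * (↑w⁻¹ : R) = 1 := by rw [← hw]; exact w.mul_inv
  have hwinv2 : (↑w⁻¹ : R) * (1 - j^K) = 1 := by rw [← hw]; exact w.inv_mul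
  have cinv : (1 - j) * (↑w⁻¹ : R) = ↑w⁻¹ * (1 - j) :=
    gz_commute_of_inv hwinv2 hwinv1 cjw
  set S : R := ∑ i ∈ Finset.range K, j^i with hS
  have cjS : j*S = S*j := by
    rw [hS, Finset.mul_sum, Finset.sum_mul]
    refine Finset.sum_congr rfl fun i _ => ?_
    rw [← pow_succ, ← pow_succ']
  have hS2 : S*(1-j) = 1 - j^K := by
    calc S*(1-j) = -(S*(j-1)) := by noncomm_ring
      _ = -(j^K - 1) := by rw [geom_sum_mul]
      _ = 1 - j^K := by noncomm_ring
  have hS1 : (1-j)*S = 1 - j^K := by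
    calc (1-j)*S = S - j*S := by noncomm_ring
      _ = S - S*j := by rw [cjS]
      _ = S*(1-j) := by noncomm_ring
      _ = 1 - j^K := hS2
  refine isUnit_iff_exists.mpr ⟨S * ↑w⁻¹, ?_, ?_⟩
  · calc (1-j)*(S*↑w⁻¹) = ((1-j)*S)*↑w⁻¹ := (mul_assoc _ _ _).symm
      _ = (1-j^K)*↑w⁻¹ := by rw [hS1]
      _ = 1 := hwinv1
  · calc (S*↑w⁻¹)*(1-j) = S*(↑w⁻¹*(1-j)) := mul_assoc _ _ _
      _ = S*((1-j)*↑w⁻¹) := by rw [← cinv]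
      _ = (S*(1-j))*↑w⁻¹ := (mul_assoc _ _ _).symm
      _ = (1-j^K)*↑w⁻¹ := by rw [hS2]
      _ = 1 := hwinv1

end GZhouHelpers

theorem stmt13 {R : Type*} [Ring R] (a b c d : R)
    (h1 : b * d * b = b * (a * c)) (h2 : d * b * d = a * c * d)
    (h : ∃ x : R, IsGZhouInv (1 - a * c) x) :
    ∃ y : R, IsGZhouInv (1 - b * d) y := by
  obtain ⟨x, hx1, hx2, n, hn, m, hm, hrad⟩ := h
  set al := 1 - a*c with hal
  have hac : a*c = 1 - al := by rw [hal]; noncomm_ring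
  -- basic commutation facts for x and al
  have cxal : x*al = al*x := hx2 al rfl
  have hax2 : al*x*x = x := by rw [← cxal]; exact hx1
  set P := 1 - al*x with hPdef
  have hPx : P*x = 0 := by
    rw [hPdef]
    calc (1-al*x)*x = x - al*x*x := by noncomm_ring
      _ = x - x := by rw [hax2]
      _ = 0 := sub_self x
  have hxP : x*P = 0 := by
    rw [hPdef]
    calc x*(1-al*x) = x - x*al*x := by noncomm_ring
      _ = x - x := by rw [hx1]
      _ = 0 := sub_self x
  have cxP : x*P = P*x := by rw [hxP, hPx]
  have caxal : (al*x)*al = al*(al*x) := by rw [mul_assoc, cxal]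
  have cPal : al*P = P*al := by
    rw [hPdef]
    calc al*(1-al*x) = al - al*(al*x) := by noncomm_ring
      _ = al - (al*x)*al := by rw [caxal]
      _ = (1-al*x)*al := by noncomm_ring
  have hPP : P*P = P := by
    calc P*P = P - al*(x*P) := by rw [hPdef]; noncomm_ring
      _ = P - al*0 := by rw [hxP]
      _ = P := by noncomm_ring
  have halx : al*x = 1 - P := by rw [hPdef]; noncomm_ring
  set T := al^n - al*x with hTdef
  -- hrad : inRadJ (T ^ m)
  have CTal : Commute T al := by
    rw [hTdef]
    exact ((Commute.refl al).pow_left n).sub_left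
      ((Commute.refl al).mul_left (show Commute x al from cxal))
  have hTP : T*P = al^n*P := by
    rw [hTdef]
    calc (al^n - al*x)*P = al^n*P - al*(x*P) := by noncomm_ring
      _ = al^n*P - al*0 := by rw [hxP]
      _ = al^n*P := by noncomm_ring
  have CalP : Commute al P := cPal
  have hPpow : ∀ k : ℕ, P^(k+1) = P := by
    intro k
    induction k with
    | zero => rw [pow_one]
    | succ k ih => rw [pow_succ, ih, hPP]
  have hkmain : ∀ k : ℕ, al^(n*k)*P = T^k*P := by
    intro k
    induction k with
    | zero => simp
    | succ k ih =>
      calc al^(n*(k+1))*P = (al^(n*k)*al^n)*P := by rw [Nat.mul_succ, pow_add]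
        _ = al^(n*k)*(al^n*P) := mul_assoc _ _ _
        _ = al^(n*k)*(T*P) := by rw [← hTP]
        _ = (al^(n*k)*T)*P := (mul_assoc _ _ _).symm
        _ = (T*al^(n*k))*P := by rw [← (CTal.pow_right (n*k)).eq]
        _ = T*(al^(n*k)*P) := mul_assoc _ _ _
        _ = T*(T^k*P) := by rw [ih]
        _ = (T*T^k)*P := (mul_assoc _ _ _).symm
        _ = T^(k+1)*P := by rw [← pow_succ']
  obtain ⟨k0, hk0⟩ : ∃ k0, n*m = k0+1 :=
    ⟨n*m - 1, (Nat.succ_pred_eq_of_pos (Nat.mul_pos hn hm)).symm⟩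
  have halPnm : (al*P)^(n*m) = T^m*P := by
    calc (al*P)^(n*m) = al^(n*m)*P^(n*m) := CalP.mul_pow (n*m)
      _ = al^(n*m)*P := by rw [hk0, hPpow k0]
      _ = T^m*P := hkmain m
  have hUnit : IsUnit (1 - al*P) := by
    refine gz_radJ_unit (K := n*m) (Nat.mul_ne_zero hn.ne' hm.ne') ?_
    rw [halPnm]
    have := gz_radJ_mul hrad 1 P
    rwa [one_mul] at this
  obtain ⟨Su, hSu⟩ := hUnit
  set s : R := ((Su⁻¹ : Rˣ) : R) with hsdef
  have hs1 : s*(1 - al*P) = 1 := by rw [hsdef, ← hSu]; exact Su.inv_mul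
  have hs2 : (1 - al*P)*s = 1 := by rw [hsdef, ← hSu]; exact Su.mul_inv
  -- generic helper: commuting with al and P gives commuting with 1 - al*P
  have c1alP : ∀ g : R, g*al = al*g → g*P = P*g → g*(1-al*P) = (1-al*P)*g := by
    intro g hga hgP
    calc g*(1-al*P) = g - (g*al)*P := by noncomm_ring
      _ = g - (al*g)*P := by rw [hga]
      _ = g - al*(g*P) := by rw [mul_assoc]
      _ = g - al*(P*g) := by rw [hgP]
      _ = (1-al*P)*g := by noncomm_ring
  have hals : al*s = s*al :=
    gz_commute_of_inv hs1 hs2 (c1alP al rfl cPal)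
  have hxs : x*s = s*x :=
    gz_commute_of_inv hs1 hs2 (c1alP x cxal cxP)
  have cPs : P*s = s*P :=
    gz_commute_of_inv hs1 hs2 (c1alP P cPal.symm rfl)
  have hAal : (a*c)*al = al*(a*c) := by rw [hac]; noncomm_ring
  have hAP : (a*c)*P = P*(a*c) := by
    rw [hac]
    calc (1-al)*P = P - al*P := by noncomm_ring
      _ = P - P*al := by rw [cPal]
      _ = P*(1-al) := by noncomm_ring
  have hAs : (a*c)*s = s*(a*c) :=
    gz_commute_of_inv hs1 hs2 (c1alP (a*c) hAal hAP)
  -- key corner identities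
  have e1alPP : (1-al*P)*P = P - al*P := by
    have e0 : (1-al*P)*P = P - al*(P*P) := by noncomm_ring
    rwa [hPP] at e0
  have KPA : P*(a*c) = (1-al*P)*P := by
    rw [hac, e1alPP]
    calc P*(1-al) = P - P*al := by noncomm_ring
      _ = P - al*P := by rw [← cPal]
  have KsPA : (s*P)*(a*c) = P := by
    calc (s*P)*(a*c) = s*(P*(a*c)) := mul_assoc _ _ _
      _ = s*((1-al*P)*P) := by rw [KPA]
      _ = (s*(1-al*P))*P := (mul_assoc _ _ _).symm
      _ = P := by rw [hs1, one_mul]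
  have KAsP : (a*c)*(s*P) = P := by
    calc (a*c)*(s*P) = ((a*c)*s)*P := (mul_assoc _ _ _).symm
      _ = (s*(a*c))*P := by rw [hAs]
      _ = s*((a*c)*P) := mul_assoc _ _ _
      _ = s*(P*(a*c)) := by rw [hAP]
      _ = s*((1-al*P)*P) := by rw [KPA]
      _ = (s*(1-al*P))*P := (mul_assoc _ _ _).symm
      _ = P := by rw [hs1, one_mul]
  have KsP2 : (s*P)*(s*P) = s*(s*P) := by
    calc (s*P)*(s*P) = s*((P*s)*P) := by noncomm_ring
      _ = s*((s*P)*P) := by rw [cPs]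
      _ = s*(s*(P*P)) := by rw [mul_assoc]
      _ = s*(s*P) := by rw [hPP]
  have KssPA : (s*(s*P))*(a*c) = s*P := by
    calc (s*(s*P))*(a*c) = s*((s*P)*(a*c)) := mul_assoc _ _ _
      _ = s*P := by rw [KsPA]
  have KAssP : (a*c)*(s*(s*P)) = s*P := by
    calc (a*c)*(s*(s*P)) = ((a*c)*s)*(s*P) := (mul_assoc _ _ _).symm
      _ = (s*(a*c))*(s*P) := by rw [hAs]
      _ = s*((a*c)*(s*P)) := mul_assoc _ _ _
      _ = s*P := by rw [KAsP]
  have halsP : al*(s*P) = s*P - P := by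
    calc al*(s*P) = s*P - (1-al)*(s*P) := by noncomm_ring
      _ = s*P - (a*c)*(s*P) := by rw [← hac]
      _ = s*P - P := by rw [KAsP]
  have hsPal : (s*P)*al = al*(s*P) := by
    calc (s*P)*al = s*(P*al) := mul_assoc _ _ _
      _ = s*(al*P) := by rw [← cPal]
      _ = (s*al)*P := (mul_assoc _ _ _).symm
      _ = (al*s)*P := by rw [← hals]
      _ = al*(s*P) := mul_assoc _ _ _
  -- intertwining relations
  have J1 : (1-b*d)*b = b*al := by
    calc (1-b*d)*b = b - b*d*b := by noncomm_ring
      _ = b - b*(a*c) := by rw [h1]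
      _ = b*al := by rw [hal]; noncomm_ring
  have J2 : d*(1-b*d) = al*d := by
    calc d*(1-b*d) = d - d*b*d := by noncomm_ring
      _ = d - a*c*d := by rw [h2]
      _ = al*d := by rw [hal]; noncomm_ring
  have hEA : (d*b)*(a*c) = (a*c)*(d*b) := by
    have e1 : (d*b)*(d*b) = (d*b)*(a*c) := by
      calc (d*b)*(d*b) = d*(b*d*b) := by noncomm_ring
        _ = d*(b*(a*c)) := by rw [h1]
        _ = (d*b)*(a*c) := by noncomm_ring
    have e2 : (d*b)*(d*b) = (a*c)*(d*b) := by
      calc (d*b)*(d*b) = (d*b*d)*b := by noncomm_ring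
        _ = (a*c*d)*b := by rw [h2]
        _ = (a*c)*(d*b) := by noncomm_ring
    rw [← e1, e2]
  have hEal : (d*b)*al = al*(d*b) := by
    rw [hal]
    calc (d*b)*(1-a*c) = (d*b) - (d*b)*(a*c) := by noncomm_ring
      _ = (d*b) - (a*c)*(d*b) := by rw [hEA]
      _ = (1-a*c)*(d*b) := by noncomm_ring
  have CalE : Commute al (d*b) := (show Commute (d*b) al from hEal).symm
  have hEx : x*(d*b) = (d*b)*x := hx2 (d*b) hEal
  have hEP : (d*b)*P = P*(d*b) := by
    rw [hPdef]
    calc (d*b)*(1-al*x) = (d*b) - ((d*b)*al)*x := by noncomm_ring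
      _ = (d*b) - (al*(d*b))*x := by rw [hEal]
      _ = (d*b) - al*((d*b)*x) := by rw [mul_assoc]
      _ = (d*b) - al*(x*(d*b)) := by rw [← hEx]
      _ = (1-al*x)*(d*b) := by noncomm_ring
  have hEs : (d*b)*s = s*(d*b) :=
    gz_commute_of_inv hs1 hs2 (c1alP (d*b) hEal hEP)
  have csPE : (s*P)*(d*b) = (d*b)*(s*P) := by
    calc (s*P)*(d*b) = s*(P*(d*b)) := mul_assoc _ _ _
      _ = s*((d*b)*P) := by rw [← hEP]
      _ = (s*(d*b))*P := (mul_assoc _ _ _).symm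
      _ = ((d*b)*s)*P := by rw [← hEs]
      _ = (d*b)*(s*P) := mul_assoc _ _ _
  -- the sandwich lemma
  have Sand : ∀ X Y : R, Y*(d*b) = (d*b)*Y →
      (b*X*d)*(b*Y*d) = b*(X*Y*(a*c))*d := by
    intro X Y hY
    calc (b*X*d)*(b*Y*d) = b*X*((d*b)*Y)*d := by noncomm_ring
      _ = b*X*(Y*(d*b))*d := by rw [← hY]
      _ = (b*(X*Y))*((d*b)*d) := by noncomm_ring
      _ = (b*(X*Y))*(d*b*d) := by noncomm_ring
      _ = (b*(X*Y))*(a*c*d) := by rw [h2]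
      _ = b*(X*Y*(a*c))*d := by noncomm_ring
  set Q : R := b*(s*P)*d with hQdef
  set NN : R := b*(s*P - P)*d with hNNdef
  -- Q is idempotent
  have hQQ : Q*Q = Q := by
    rw [hQdef, Sand _ _ csPE, KsP2, KssPA]
  -- Q commutes with 1 - b*d
  have hbQ : (1-b*d)*Q = NN := by
    rw [hQdef, hNNdef]
    calc (1-b*d)*(b*(s*P)*d) = b*(s*P)*d - (b*d*b)*((s*P)*d) := by noncomm_ring
      _ = b*(s*P)*d - (b*(a*c))*((s*P)*d) := by rw [h1]
      _ = b*((s*P) - (a*c)*(s*P))*d := by noncomm_ring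
      _ = b*(s*P - P)*d := by rw [KAsP]
  have hQb : Q*(1-b*d) = NN := by
    rw [hQdef, hNNdef]
    calc (b*(s*P)*d)*(1-b*d) = b*(s*P)*d - (b*(s*P))*(d*b*d) := by noncomm_ring
      _ = b*(s*P)*d - (b*(s*P))*(a*c*d) := by rw [h2]
      _ = b*((s*P) - (s*P)*(a*c))*d := by noncomm_ring
      _ = b*(s*P - P)*d := by rw [KsPA]
  have hQcomm : Q*(1-b*d) = (1-b*d)*Q := by rw [hQb, hbQ]
  -- the explicit approximate inverse y0
  set u0 : R := x - s*P with hu0def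
  set y0 : R := 1 + b*u0*d with hy0def
  have halu0 : al*u0 = 1 - s*P := by
    rw [hu0def]
    calc al*(x - s*P) = al*x - al*(s*P) := by noncomm_ring
      _ = al*x - (s*P - P) := by rw [halsP]
      _ = (1 - P) - (s*P - P) := by rw [halx]
      _ = 1 - s*P := by noncomm_ring
  have hu0al : u0*al = 1 - s*P := by
    rw [hu0def]
    calc (x - s*P)*al = x*al - (s*P)*al := by noncomm_ring
      _ = al*x - al*(s*P) := by rw [cxal, hsPal]
      _ = al*x - (s*P - P) := by rw [halsP]
      _ = (1 - P) - (s*P - P) := by rw [halx]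
      _ = 1 - s*P := by noncomm_ring
  have hby0 : (1-b*d)*y0 = 1 - Q := by
    rw [hy0def, hQdef]
    calc (1-b*d)*(1 + b*u0*d) = (1-b*d) + ((1-b*d)*b)*(u0*d) := by noncomm_ring
      _ = (1-b*d) + (b*al)*(u0*d) := by rw [J1]
      _ = (1-b*d) + b*(al*u0)*d := by noncomm_ring
      _ = (1-b*d) + b*(1 - s*P)*d := by rw [halu0]
      _ = 1 - b*(s*P)*d := by noncomm_ring
  have hy0b : y0*(1-b*d) = 1 - Q := by
    rw [hy0def, hQdef]
    calc (1 + b*u0*d)*(1-b*d) = (1-b*d) + (b*u0)*(d*(1-b*d)) := by noncomm_ring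
      _ = (1-b*d) + (b*u0)*(al*d) := by rw [J2]
      _ = (1-b*d) + b*(u0*al)*d := by noncomm_ring
      _ = (1-b*d) + b*(1 - s*P)*d := by rw [hu0al]
      _ = 1 - b*(s*P)*d := by noncomm_ring
  have cu0E : u0*(d*b) = (d*b)*u0 := by
    rw [hu0def]
    calc (x - s*P)*(d*b) = x*(d*b) - (s*P)*(d*b) := by noncomm_ring
      _ = (d*b)*x - (d*b)*(s*P) := by rw [hEx, csPE]
      _ = (d*b)*(x - s*P) := by noncomm_ring
  have hQy0 : Q*y0 = 0 := by
    have key4 : (s*P)*u0*(a*c) = -(s*P) := by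
      calc (s*P)*u0*(a*c) = ((s*P)*x)*(a*c) - ((s*P)*(s*P))*(a*c) := by
            rw [hu0def]; noncomm_ring
        _ = ((s*P)*x)*(a*c) - (s*(s*P))*(a*c) := by rw [KsP2]
        _ = ((s*P)*x)*(a*c) - s*P := by rw [KssPA]
        _ = (s*(P*x))*(a*c) - s*P := by rw [mul_assoc s P x]
        _ = (s*(0:R))*(a*c) - s*P := by rw [hPx]
        _ = -(s*P) := by noncomm_ring
    rw [hy0def, hQdef]
    calc (b*(s*P)*d)*(1 + b*u0*d)
        = b*(s*P)*d + (b*(s*P)*d)*(b*u0*d) := by noncomm_ring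
      _ = b*(s*P)*d + b*((s*P)*u0*(a*c))*d := by rw [Sand _ _ cu0E]
      _ = b*(s*P)*d + b*(-(s*P))*d := by rw [key4]
      _ = 0 := by noncomm_ring
  have hy0Q : y0*Q = 0 := by
    have key4' : u0*(s*P)*(a*c) = -(s*P) := by
      calc u0*(s*P)*(a*c) = ((x*s)*P)*(a*c) - ((s*P)*(s*P))*(a*c) := by
            rw [hu0def]; noncomm_ring
        _ = ((s*x)*P)*(a*c) - (s*(s*P))*(a*c) := by rw [hxs, KsP2]
        _ = ((s*x)*P)*(a*c) - s*P := by rw [KssPA]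
        _ = (s*(x*P))*(a*c) - s*P := by rw [mul_assoc s x P]
        _ = (s*(0:R))*(a*c) - s*P := by rw [hxP]
        _ = -(s*P) := by noncomm_ring
    rw [hy0def, hQdef]
    calc (1 + b*u0*d)*(b*(s*P)*d)
        = b*(s*P)*d + (b*u0*d)*(b*(s*P)*d) := by noncomm_ring
      _ = b*(s*P)*d + b*(u0*(s*P)*(a*c))*d := by rw [Sand _ _ csPE]
      _ = b*(s*P)*d + b*(-(s*P))*d := by rw [key4']
      _ = 0 := by noncomm_ring
  -- powers of NN
  have hsPmPA : (s*P - P)*(a*c) = al*P := by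
    calc (s*P - P)*(a*c) = (s*P)*(a*c) - P*(a*c) := by noncomm_ring
      _ = P - (1-al*P)*P := by rw [KsPA, KPA]
      _ = al*(P*P) := by noncomm_ring
      _ = al*P := by rw [hPP]
  have hYNN : (s*P - P)*(d*b) = (d*b)*(s*P - P) := by
    calc (s*P - P)*(d*b) = (s*P)*(d*b) - P*(d*b) := by noncomm_ring
      _ = (d*b)*(s*P) - (d*b)*P := by rw [csPE, ← hEP]
      _ = (d*b)*(s*P - P) := by noncomm_ring
  have hNpow : ∀ k : ℕ, NN^(k+1) = b*(s*(al*P)^(k+1))*d := by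
    intro k
    induction k with
    | zero =>
      rw [pow_one, pow_one, hNNdef]
      have e : s*(al*P) = s*P - P := by
        calc s*(al*P) = (s*al)*P := (mul_assoc _ _ _).symm
          _ = (al*s)*P := by rw [← hals]
          _ = al*(s*P) := mul_assoc _ _ _
          _ = s*P - P := halsP
      rw [e]
    | succ k ih =>
      have key : (s*(al*P)^(k+1))*(s*P - P)*(a*c) = s*(al*P)^(k+1+1) := by
        calc (s*(al*P)^(k+1))*(s*P - P)*(a*c)
            = (s*(al*P)^(k+1))*((s*P - P)*(a*c)) := mul_assoc _ _ _
          _ = (s*(al*P)^(k+1))*(al*P) := by rw [hsPmPA]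
          _ = s*((al*P)^(k+1)*(al*P)) := mul_assoc _ _ _
          _ = s*(al*P)^(k+1+1) := by rw [← pow_succ]
      rw [pow_succ, ih, hNNdef, Sand _ _ hYNN, key]
  have hNrad : inRadJ (NN^(n*m)) := by
    have e : NN^(n*m) = (b*s)*(T^m)*(P*d) := by
      rw [hk0, hNpow k0, ← hk0, halPnm]
      noncomm_ring
    rw [e]
    exact gz_radJ_mul hrad (b*s) (P*d)
  have hVunit : IsUnit (1 + NN) := by
    have h2nm : inRadJ ((-NN)^(2*(n*m))) := by
      have e : (-NN)^(2*(n*m)) = NN^(n*m)*NN^(n*m) := by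
        rw [(even_two_mul (n*m)).neg_pow, two_mul, pow_add]
      rw [e]
      have := gz_radJ_mul hNrad 1 (NN^(n*m))
      rwa [one_mul] at this
    have hK : 2*(n*m) ≠ 0 := Nat.mul_ne_zero two_ne_zero (Nat.mul_ne_zero hn.ne' hm.ne')
    have := gz_radJ_unit hK h2nm
    rwa [sub_neg_eq_add] at this
  obtain ⟨Vu, hVu⟩ := hVunit
  -- (1 - b*d) + Q is a unit
  have hA1 : ((1-b*d)+Q)*(y0+Q) = 1 + NN := by
    calc ((1-b*d)+Q)*(y0+Q)
        = (1-b*d)*y0 + (1-b*d)*Q + (Q*y0 + Q*Q) := by noncomm_ring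
      _ = (1 - Q) + NN + (0 + Q) := by rw [hby0, hbQ, hQy0, hQQ]
      _ = 1 + NN := by noncomm_ring
  have hA2 : (y0+Q)*((1-b*d)+Q) = 1 + NN := by
    calc (y0+Q)*((1-b*d)+Q)
        = y0*(1-b*d) + y0*Q + (Q*(1-b*d) + Q*Q) := by noncomm_ring
      _ = (1 - Q) + 0 + (NN + Q) := by rw [hy0b, hy0Q, hQb, hQQ]
      _ = 1 + NN := by noncomm_ring
  have hV1 : ((1-b*d)+Q)*((y0+Q)*(↑Vu⁻¹ : R)) = 1 := by
    rw [← mul_assoc, hA1, ← hVu]; exact Vu.mul_inv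
  have hV2 : ((↑Vu⁻¹ : R)*(y0+Q))*((1-b*d)+Q) = 1 := by
    rw [mul_assoc, hA2, ← hVu]; exact Vu.inv_mul
  have heq : (y0+Q)*(↑Vu⁻¹ : R) = (↑Vu⁻¹ : R)*(y0+Q) := by
    calc (y0+Q)*(↑Vu⁻¹ : R) = 1*((y0+Q)*(↑Vu⁻¹ : R)) := (one_mul _).symm
      _ = (((↑Vu⁻¹ : R)*(y0+Q))*((1-b*d)+Q))*((y0+Q)*(↑Vu⁻¹ : R)) := by rw [hV2]
      _ = ((↑Vu⁻¹ : R)*(y0+Q))*(((1-b*d)+Q)*((y0+Q)*(↑Vu⁻¹ : R))) := by rw [mul_assoc]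
      _ = ((↑Vu⁻¹ : R)*(y0+Q))*1 := by rw [hV1]
      _ = (↑Vu⁻¹ : R)*(y0+Q) := mul_one _
  have hWunit : IsUnit ((1-b*d)+Q) :=
    isUnit_iff_exists.mpr ⟨(y0+Q)*(↑Vu⁻¹ : R), hV1, by rw [heq]; exact hV2⟩
  obtain ⟨Wu, hWu⟩ := hWunit
  have hr1 : (↑Wu⁻¹ : R)*((1-b*d)+Q) = 1 := by rw [← hWu]; exact Wu.inv_mul
  have hr2 : ((1-b*d)+Q)*(↑Wu⁻¹ : R) = 1 := by rw [← hWu]; exact Wu.mul_inv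
  -- commutation of the inverse with 1-b*d and Q
  have hbW : (1-b*d)*((1-b*d)+Q) = ((1-b*d)+Q)*(1-b*d) := by
    rw [mul_add, add_mul, hQcomm]
  have hQW : Q*((1-b*d)+Q) = ((1-b*d)+Q)*Q := by
    rw [mul_add, add_mul, hQcomm]
  have hbr : (1-b*d)*(↑Wu⁻¹ : R) = (↑Wu⁻¹ : R)*(1-b*d) :=
    gz_commute_of_inv hr1 hr2 hbW
  have hQr : Q*(↑Wu⁻¹ : R) = (↑Wu⁻¹ : R)*Q :=
    gz_commute_of_inv hr1 hr2 hQW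
  have c1Qr : (1-Q)*(↑Wu⁻¹ : R) = (↑Wu⁻¹ : R)*(1-Q) := by
    calc (1-Q)*(↑Wu⁻¹ : R) = ↑Wu⁻¹ - Q*↑Wu⁻¹ := by noncomm_ring
      _ = ↑Wu⁻¹ - (↑Wu⁻¹ : R)*Q := by rw [hQr]
      _ = (↑Wu⁻¹ : R)*(1-Q) := by noncomm_ring
  have h1Q2 : ((1:R)-Q)*(1-Q) = 1-Q := by
    calc ((1:R)-Q)*(1-Q) = 1 - Q - Q + Q*Q := by noncomm_ring
      _ = 1 - Q - Q + Q := by rw [hQQ]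
      _ = 1 - Q := by noncomm_ring
  -- the generalized Zhou inverse of 1 - b*d
  set yy : R := (↑Wu⁻¹ : R)*(1-Q) with hyydef
  have e1 : ((1-b*d)+Q)*(1-Q) = (1-b*d)*(1-Q) := by
    calc ((1-b*d)+Q)*(1-Q) = (1-b*d)*(1-Q) + (Q - Q*Q) := by noncomm_ring
      _ = (1-b*d)*(1-Q) + (Q - Q) := by rw [hQQ]
      _ = (1-b*d)*(1-Q) := by noncomm_ring
  have h_by : (1-b*d)*yy = 1 - Q := by
    rw [hyydef]
    calc (1-b*d)*((↑Wu⁻¹ : R)*(1-Q)) = ((1-b*d)*(↑Wu⁻¹ : R))*(1-Q) := (mul_assoc _ _ _).symm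
      _ = ((↑Wu⁻¹ : R)*(1-b*d))*(1-Q) := by rw [hbr]
      _ = (↑Wu⁻¹ : R)*((1-b*d)*(1-Q)) := mul_assoc _ _ _
      _ = (↑Wu⁻¹ : R)*(((1-b*d)+Q)*(1-Q)) := by rw [e1]
      _ = ((↑Wu⁻¹ : R)*((1-b*d)+Q))*(1-Q) := (mul_assoc _ _ _).symm
      _ = 1*(1-Q) := by rw [hr1]
      _ = 1 - Q := one_mul _
  have e2 : ((1:R)-Q)*(1-b*d) = ((1-b*d)+Q)*(1-Q) := by
    calc ((1:R)-Q)*(1-b*d) = (1-b*d) - Q*(1-b*d) := by noncomm_ring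
      _ = (1-b*d) - (1-b*d)*Q := by rw [hQcomm]
      _ = ((1-b*d)+Q)*(1-Q) + (Q*Q - Q) := by noncomm_ring
      _ = ((1-b*d)+Q)*(1-Q) + (Q - Q) := by rw [hQQ]
      _ = ((1-b*d)+Q)*(1-Q) := by noncomm_ring
  have h_yb : yy*(1-b*d) = 1 - Q := by
    rw [hyydef]
    calc ((↑Wu⁻¹ : R)*(1-Q))*(1-b*d) = (↑Wu⁻¹ : R)*((1-Q)*(1-b*d)) := mul_assoc _ _ _
      _ = (↑Wu⁻¹ : R)*(((1-b*d)+Q)*(1-Q)) := by rw [e2]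
      _ = ((↑Wu⁻¹ : R)*((1-b*d)+Q))*(1-Q) := (mul_assoc _ _ _).symm
      _ = 1*(1-Q) := by rw [hr1]
      _ = 1 - Q := one_mul _
  -- condition (1): yy * (1-b*d) * yy = yy
  have final1 : yy*(1-b*d)*yy = yy := by
    calc yy*(1-b*d)*yy = (1-Q)*yy := by rw [h_yb]
      _ = (1-Q)*((↑Wu⁻¹ : R)*(1-Q)) := by rw [hyydef]
      _ = ((1-Q)*(↑Wu⁻¹ : R))*(1-Q) := (mul_assoc _ _ _).symm
      _ = ((↑Wu⁻¹ : R)*(1-Q))*(1-Q) := by rw [c1Qr]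
      _ = (↑Wu⁻¹ : R)*((1-Q)*(1-Q)) := mul_assoc _ _ _
      _ = (↑Wu⁻¹ : R)*(1-Q) := by rw [h1Q2]
      _ = yy := by rw [hyydef]
  -- condition (2): double commutation
  have hQzQ : ∀ z : R, z*(1-b*d) = (1-b*d)*z → z*Q = Q*z := by
    intro z hz
    have hzbd : z*(b*d) = (b*d)*z := by
      have e : z - z*(b*d) = z - (b*d)*z := by
        calc z - z*(b*d) = z*(1-b*d) := by noncomm_ring
          _ = (1-b*d)*z := hz
          _ = z - (b*d)*z := by noncomm_ring
      exact sub_right_inj.mp e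
    have hvAl : (d*z*b)*al = al*(d*z*b) := by
      have e : al*(d*z*b) = (d*z*b)*al := by
        calc al*(d*z*b) = (al*d)*(z*b) := by noncomm_ring
          _ = (d*(1-b*d))*(z*b) := by rw [← J2]
          _ = d*((1-b*d)*z)*b := by noncomm_ring
          _ = d*(z*(1-b*d))*b := by rw [← hz]
          _ = (d*z)*((1-b*d)*b) := by noncomm_ring
          _ = (d*z)*(b*al) := by rw [J1]
          _ = (d*z*b)*al := by noncomm_ring
      exact e.symm
    have hvx : x*(d*z*b) = (d*z*b)*x := hx2 _ hvAl
    have hvP : (d*z*b)*P = P*(d*z*b) := by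
      rw [hPdef]
      calc (d*z*b)*(1-al*x) = (d*z*b) - ((d*z*b)*al)*x := by noncomm_ring
        _ = (d*z*b) - (al*(d*z*b))*x := by rw [hvAl]
        _ = (d*z*b) - al*((d*z*b)*x) := by rw [mul_assoc al (d*z*b) x]
        _ = (d*z*b) - al*(x*(d*z*b)) := by rw [← hvx]
        _ = (1-al*x)*(d*z*b) := by noncomm_ring
    have hvs : (d*z*b)*s = s*(d*z*b) :=
      gz_commute_of_inv hs1 hs2 (c1alP _ hvAl hvP)
    have hvsP : (d*z*b)*(s*P) = (s*P)*(d*z*b) := by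
      calc (d*z*b)*(s*P) = ((d*z*b)*s)*P := (mul_assoc _ _ _).symm
        _ = (s*(d*z*b))*P := by rw [hvs]
        _ = s*((d*z*b)*P) := mul_assoc _ _ _
        _ = s*(P*(d*z*b)) := by rw [hvP]
        _ = (s*P)*(d*z*b) := (mul_assoc _ _ _).symm
    have hbv : b*(d*z*b) = z*(b*(a*c)) := by
      calc b*(d*z*b) = ((b*d)*z)*b := by noncomm_ring
        _ = (z*(b*d))*b := by rw [← hzbd]
        _ = z*(b*d*b) := by noncomm_ring
        _ = z*(b*(a*c)) := by rw [h1]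
    have hvd : (d*z*b)*d = (a*c)*(d*z) := by
      calc (d*z*b)*d = d*(z*(b*d)) := by noncomm_ring
        _ = d*((b*d)*z) := by rw [hzbd]
        _ = (d*b*d)*z := by noncomm_ring
        _ = (a*c*d)*z := by rw [h2]
        _ = (a*c)*(d*z) := by noncomm_ring
    have E0 : Q*z*Q = b*((s*P)*((d*z*b)*(s*P)))*d := by
      rw [hQdef]; noncomm_ring
    have path1 : Q*z*Q = Q*z := by
      calc Q*z*Q = b*((s*P)*((d*z*b)*(s*P)))*d := E0
        _ = b*((s*P)*((s*P)*(d*z*b)))*d := by rw [hvsP]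
        _ = b*(((s*P)*(s*P))*(d*z*b))*d := by rw [← mul_assoc (s*P) (s*P) (d*z*b)]
        _ = b*((s*(s*P))*(d*z*b))*d := by rw [KsP2]
        _ = (b*(s*(s*P)))*((d*z*b)*d) := by noncomm_ring
        _ = (b*(s*(s*P)))*((a*c)*(d*z)) := by rw [hvd]
        _ = (b*((s*(s*P))*(a*c))*d)*z := by noncomm_ring
        _ = (b*(s*P)*d)*z := by rw [KssPA]
        _ = Q*z := by rw [hQdef]
    have path2 : Q*z*Q = z*Q := by
      calc Q*z*Q = b*((s*P)*((d*z*b)*(s*P)))*d := E0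
        _ = b*(((s*P)*(d*z*b))*(s*P))*d := by rw [← mul_assoc (s*P) (d*z*b) (s*P)]
        _ = b*(((d*z*b)*(s*P))*(s*P))*d := by rw [← hvsP]
        _ = b*((d*z*b)*((s*P)*(s*P)))*d := by rw [mul_assoc (d*z*b) (s*P) (s*P)]
        _ = b*((d*z*b)*(s*(s*P)))*d := by rw [KsP2]
        _ = (b*(d*z*b))*((s*(s*P))*d) := by noncomm_ring
        _ = (z*(b*(a*c)))*((s*(s*P))*d) := by rw [hbv]
        _ = z*(b*((a*c)*(s*(s*P)))*d) := by noncomm_ring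
        _ = z*(b*(s*P)*d) := by rw [KAssP]
        _ = z*Q := by rw [hQdef]
    exact path2.symm.trans path1
  have final2 : inComm2 (1-b*d) yy := by
    intro z hz
    have hQz : z*Q = Q*z := hQzQ z hz
    have hzW : z*((1-b*d)+Q) = ((1-b*d)+Q)*z := by
      rw [mul_add, add_mul, hz, hQz]
    have hzr : z*(↑Wu⁻¹ : R) = (↑Wu⁻¹ : R)*z :=
      gz_commute_of_inv hr1 hr2 hzW
    have h1Qz : (1-Q)*z = z*(1-Q) := by
      calc (1-Q)*z = z - Q*z := by noncomm_ring
        _ = z - z*Q := by rw [← hQz]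
        _ = z*(1-Q) := by noncomm_ring
    rw [hyydef]
    calc ((↑Wu⁻¹ : R)*(1-Q))*z = (↑Wu⁻¹ : R)*((1-Q)*z) := mul_assoc _ _ _
      _ = (↑Wu⁻¹ : R)*(z*(1-Q)) := by rw [h1Qz]
      _ = ((↑Wu⁻¹ : R)*z)*(1-Q) := (mul_assoc _ _ _).symm
      _ = (z*(↑Wu⁻¹ : R))*(1-Q) := by rw [← hzr]
      _ = z*((↑Wu⁻¹ : R)*(1-Q)) := mul_assoc _ _ _
  -- condition (3): (1-b*d)^n - (1-b*d)*yy lies in √J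
  have hbeta_pow : ∀ k : ℕ, ∃ g : R,
      (1-b*d)^k = 1 + b*g*d ∧ g*(a*c) = al^k - 1 ∧ g*(d*b) = (d*b)*g := by
    intro k
    induction k with
    | zero => exact ⟨0, by simp, by simp, by simp⟩
    | succ k ih =>
      obtain ⟨g, hg1, hg2, hg3⟩ := ih
      refine ⟨g - al^k, ?_, ?_, ?_⟩
      · calc (1-b*d)^(k+1) = (1-b*d)^k * (1-b*d) := pow_succ _ _
          _ = (1 + b*g*d)*(1-b*d) := by rw [hg1]
          _ = 1 - b*d + b*g*d - (b*g)*(d*b*d) := by noncomm_ring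
          _ = 1 - b*d + b*g*d - (b*g)*(a*c*d) := by rw [h2]
          _ = 1 - b*d + b*g*d - b*(g*(a*c))*d := by noncomm_ring
          _ = 1 - b*d + b*g*d - b*(al^k - 1)*d := by rw [hg2]
          _ = 1 + b*(g - al^k)*d := by noncomm_ring
      · calc (g - al^k)*(a*c) = g*(a*c) - al^k*(a*c) := by noncomm_ring
          _ = (al^k - 1) - al^k*(1 - al) := by rw [hg2, hac]
          _ = al^k*al - 1 := by noncomm_ring
          _ = al^(k+1) - 1 := by rw [← pow_succ]
      · have hEk : al^k*(d*b) = (d*b)*al^k := ((CalE).pow_left k).eq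
        calc (g - al^k)*(d*b) = g*(d*b) - al^k*(d*b) := by noncomm_ring
          _ = (d*b)*g - (d*b)*al^k := by rw [hg3, hEk]
          _ = (d*b)*(g - al^k) := by noncomm_ring
  obtain ⟨g, hg1, hg2, hg3⟩ := hbeta_pow n
  have hGE : (g + s*P)*(d*b) = (d*b)*(g + s*P) := by
    calc (g + s*P)*(d*b) = g*(d*b) + (s*P)*(d*b) := by noncomm_ring
      _ = (d*b)*g + (d*b)*(s*P) := by rw [hg3, csPE]
      _ = (d*b)*(g + s*P) := by noncomm_ring
  have hGA : (g + s*P)*(a*c) = T := by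
    calc (g + s*P)*(a*c) = g*(a*c) + (s*P)*(a*c) := by noncomm_ring
      _ = (al^n - 1) + P := by rw [hg2, KsPA]
      _ = T := by rw [hTdef, hPdef]; noncomm_ring
  have hGpow : ∀ k : ℕ, (b*(g + s*P)*d)^(k+1) = b*((g + s*P)*T^k)*d := by
    intro k
    induction k with
    | zero => rw [pow_one, pow_zero, mul_one]
    | succ k ih =>
      have key : ((g + s*P)*T^k)*(g + s*P)*(a*c) = (g + s*P)*T^(k+1) := by
        calc ((g + s*P)*T^k)*(g + s*P)*(a*c)
            = ((g + s*P)*T^k)*((g + s*P)*(a*c)) := mul_assoc _ _ _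
          _ = ((g + s*P)*T^k)*T := by rw [hGA]
          _ = (g + s*P)*(T^k*T) := mul_assoc _ _ _
          _ = (g + s*P)*T^(k+1) := by rw [← pow_succ]
      rw [pow_succ, ih, Sand _ _ hGE, key]
  have hE : (1-b*d)^n - (1-Q) = b*(g + s*P)*d := by
    rw [hg1, hQdef]; noncomm_ring
  have final3 : inRadJ (((1-b*d)^n - (1-b*d)*yy)^(m+1)) := by
    rw [h_by, hE, hGpow m]
    have e2 : b*((g + s*P)*T^m)*d = (b*(g + s*P))*(T^m)*d := by noncomm_ring
    rw [e2]
    exact gz_radJ_mul hrad (b*(g + s*P)) d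
  exact ⟨yy, final1, final2, n, hn, m+1, Nat.succ_pos m, final3⟩
end

section
/- An element a of a ring R has a Zhou inverse if and only if a − a^{n+1} is nilpotent for some n ∈ ℕ. -/
/-- Idempotent lifting along nilpotents in a commutative ring. -/
lemma zhou_lift_idem {S : Type*} [CommRing S] :
    ∀ k : ℕ, ∀ x : S, (x * x - x) ^ k = 0 → ∃ e : S, e * e = e ∧ IsNilpotent (x - e) := by
  intro k
  induction k using Nat.strong_induction_on with
  | _ k ih =>
    intro x hx
    match k, hx with
    | 0, hx =>
      have h1 : (1 : S) = 0 := by simpa using hx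
      exact ⟨0, by simp, ⟨1, by simp [show x = 0 by calc x = x * 1 := by ring
        _ = 0 := by rw [h1]; ring]⟩⟩
    | 1, hx =>
      refine ⟨x, ?_, ⟨1, by simp⟩⟩
      have : x * x - x = 0 := by simpa using hx
      linear_combination this
    | (k+2), hx =>
      have key : (3 * x ^ 2 - 2 * x ^ 3) * (3 * x ^ 2 - 2 * x ^ 3) - (3 * x ^ 2 - 2 * x ^ 3)
          = (x * x - x) ^ 2 * (4 * (x * x - x) - 3) := by ring
      have hyk : ((3 * x ^ 2 - 2 * x ^ 3) * (3 * x ^ 2 - 2 * x ^ 3)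
          - (3 * x ^ 2 - 2 * x ^ 3)) ^ (k + 1) = 0 := by
        rw [key, mul_pow, ← pow_mul]
        have h2 : 2 * (k + 1) = (k + 2) + k := by omega
        rw [h2, pow_add, hx, zero_mul, zero_mul]
      obtain ⟨e, he, hne⟩ := ih (k + 1) (by omega) (3 * x ^ 2 - 2 * x ^ 3) hyk
      refine ⟨e, he, ?_⟩
      have h1 : IsNilpotent (x - (3 * x ^ 2 - 2 * x ^ 3)) := by
        refine ⟨k + 2, ?_⟩
        have : x - (3 * x ^ 2 - 2 * x ^ 3) = (2 * x - 1) * (x * x - x) := by ring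
        rw [this, mul_pow, hx, mul_zero]
      have h2 : x - e = (x - (3 * x ^ 2 - 2 * x ^ 3)) + ((3 * x ^ 2 - 2 * x ^ 3) - e) := by
        ring
      rw [h2]
      exact (Commute.all _ _).isNilpotent_add h1 hne

/-- helper: positive power of an idempotent. -/
lemma zhou_idem_pow {S : Type*} [Monoid S] {e : S} (he : e * e = e) :
    ∀ n : ℕ, 0 < n → e ^ n = e := by
  intro n hn
  induction n with
  | zero => omega
  | succ m ihm =>
    rcases Nat.eq_zero_or_pos m with h | h
    · simp [h]
    · rw [pow_succ, ihm h, he]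

/-- Commutative key lemma, backward direction. -/
lemma zhou_comm_back {S : Type*} [CommRing S] (a : S) (n : ℕ) (hn : 0 < n)
    (h : IsNilpotent (a - a ^ (n + 1))) :
    ∃ b : S, b * a * b = b ∧ IsNilpotent (a ^ n - a * b) := by
  have hn1 : n - 1 + 1 = n := Nat.succ_pred_eq_of_pos hn
  have ht : IsNilpotent (a ^ n * a ^ n - a ^ n) := by
    have hid : a ^ n * a ^ n - a ^ n = (-(a ^ (n - 1))) * (a - a ^ (n + 1)) := by
      have e1 : a ^ (n - 1) * a = a ^ n := by rw [← pow_succ, hn1]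
      have e2 : a ^ (n - 1) * a ^ (n + 1) = a ^ n * a ^ n := by
        rw [← pow_add, ← pow_add]; congr 1; omega
      calc a ^ n * a ^ n - a ^ n = -(a ^ (n - 1) * a - a ^ (n - 1) * a ^ (n + 1)) := by
            rw [e1, e2]; ring
        _ = (-(a ^ (n - 1))) * (a - a ^ (n + 1)) := by ring
    rw [hid]
    exact (Commute.all _ _).isNilpotent_mul_left h
  obtain ⟨m, hm⟩ := ht
  obtain ⟨e, he, hxe⟩ := zhou_lift_idem m (a ^ n) hm
  have hνnil : IsNilpotent (e * (a ^ n - e)) := (Commute.all _ _).isNilpotent_mul_left hxe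
  obtain ⟨u, hu⟩ := hνnil.isUnit_one_add
  have heu : e * a ^ n = e * (1 + e * (a ^ n - e)) := by
    linear_combination (e + 1 - a ^ n) * he
  have hab : a * (a ^ (n - 1) * (e * ↑u⁻¹)) = e := by
    calc a * (a ^ (n - 1) * (e * ↑u⁻¹)) = (e * a ^ n) * ↑u⁻¹ := by
          rw [← mul_assoc, mul_comm a (a ^ (n - 1)), ← pow_succ, hn1]; ring
      _ = e * ((1 + e * (a ^ n - e)) * ↑u⁻¹) := by rw [heu]; ring
      _ = e * (↑u * ↑u⁻¹) := by rw [hu]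
      _ = e := by rw [Units.mul_inv, mul_one]
  refine ⟨a ^ (n - 1) * (e * ↑u⁻¹), ?_, ?_⟩
  · calc (a ^ (n - 1) * (e * ↑u⁻¹)) * a * (a ^ (n - 1) * (e * ↑u⁻¹))
        = (a * (a ^ (n - 1) * (e * ↑u⁻¹))) * (a ^ (n - 1) * (↑u⁻¹ * e)) := by ring
      _ = a ^ (n - 1) * (↑u⁻¹ * (e * e)) := by rw [hab]; ring
      _ = a ^ (n - 1) * (e * ↑u⁻¹) := by rw [he]; ring
  · have h2 : a ^ n - a * (a ^ (n - 1) * (e * ↑u⁻¹)) = a ^ n - e := by rw [hab]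
    rw [h2]; exact hxe

/-- Commutative key lemma, forward direction. -/
lemma zhou_comm_fwd {S : Type*} [CommRing S] (a b : S) (hb : b * a * b = b)
    (n : ℕ) (hn : 0 < n) (h : IsNilpotent (a ^ n - a * b)) :
    IsNilpotent (a - a ^ (n + 1)) := by
  have he : (a * b) * (a * b) = a * b := by
    calc (a * b) * (a * b) = a * (b * a * b) := by ring
      _ = a * b := by rw [hb]
  have h1e : IsNilpotent (a * (1 - a * b)) := by
    apply IsNilpotent.of_pow (m := n)
    have h1en : (1 - a * b) ^ n = 1 - a * b :=
      zhou_idem_pow (by linear_combination he) n hn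
    have hq : (a * (1 - a * b)) ^ n = (a ^ n - a * b) * (1 - a * b) := by
      rw [mul_pow, h1en]
      linear_combination (-1 : S) * he
    rw [hq]
    exact (Commute.all _ _).isNilpotent_mul_right h
  have key : a - a ^ (n + 1)
      = a * (1 - a * b) - (a * (a ^ n - a * b) + a * (1 - a * b) * (a * b)) := by
    linear_combination (-a) * he
  rw [key]
  refine (Commute.all _ _).isNilpotent_sub h1e ?_
  exact (Commute.all _ _).isNilpotent_add ((Commute.all _ _).isNilpotent_mul_left h)
    ((Commute.all _ _).isNilpotent_mul_right h1e)

theorem stmt15 {R : Type*} [Ring R] (a : R) :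
    (∃ b : R, IsZhouInv a b) ↔ ∃ n : ℕ, 0 < n ∧ IsNilpotent (a - a ^ (n + 1)) := by
  classical
  let C : Subring R := Subring.centralizer {a}
  let D : Subring R := Subring.centralizer (C : Set R)
  have haC : a ∈ C := Subring.mem_centralizer_iff.mpr
    (fun g hg => by rw [Set.mem_singleton_iff] at hg; rw [hg])
  have hDsubC : ∀ x ∈ D, x ∈ C := by
    intro x hx
    exact Subring.mem_centralizer_iff.mpr (by
      intro g hg
      rw [Set.mem_singleton_iff] at hg
      rw [hg]
      exact Subring.mem_centralizer_iff.mp hx a haC)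
  have haD : a ∈ D := by
    refine Subring.mem_centralizer_iff.mpr ?_
    intro g hg
    exact (Subring.mem_centralizer_iff.mp hg a rfl).symm
  letI : CommRing D :=
    { (inferInstance : Ring D) with
      mul_comm := fun x y => by
        have hyC : (y : R) ∈ C := hDsubC _ y.2
        have := Subring.mem_centralizer_iff.mp x.2 (y : R) hyC
        exact Subtype.ext this.symm }
  have coe_pow : ∀ (x : D) (m : ℕ), ((x ^ m : D) : R) = (x : R) ^ m := fun x m => by
    induction m with
    | zero => simp
    | succ k ihk => rw [pow_succ, pow_succ, ← ihk]; rfl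
  have nil_of_coe : ∀ x : D, IsNilpotent (x : R) → IsNilpotent x := by
    intro x ⟨m, hm⟩
    exact ⟨m, Subtype.ext (by rw [coe_pow]; exact hm)⟩
  have nil_coe : ∀ x : D, IsNilpotent x → IsNilpotent (x : R) := by
    intro x ⟨m, hm⟩
    exact ⟨m, by rw [← coe_pow, hm]; rfl⟩
  let A : D := ⟨a, haD⟩
  constructor
  · rintro ⟨b, hb1, hb2, n, hn, hnil⟩
    have hbD : b ∈ D := by
      refine Subring.mem_centralizer_iff.mpr ?_
      intro g hg
      have hga : g * a = a * g := (Subring.mem_centralizer_iff.mp hg a rfl).symm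
      exact (hb2 g hga).symm
    let B : D := ⟨b, hbD⟩
    have hb1' : B * A * B = B := Subtype.ext hb1
    have hnil' : IsNilpotent (A ^ n - A * B) := by
      apply nil_of_coe
      have hc : ((A ^ n - A * B : D) : R) = a ^ n - a * b := by
        push_cast [coe_pow]; rfl
      rw [hc]; exact hnil
    have hmain := zhou_comm_fwd A B hb1' n hn hnil'
    refine ⟨n, hn, ?_⟩
    have hcoe : ((A - A ^ (n + 1) : D) : R) = a - a ^ (n + 1) := by
      push_cast [coe_pow]; rfl
    rw [← hcoe]
    exact nil_coe _ hmain
  · rintro ⟨n, hn, hq⟩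
    have hq' : IsNilpotent (A - A ^ (n + 1)) := by
      apply nil_of_coe
      have hc : ((A - A ^ (n + 1) : D) : R) = a - a ^ (n + 1) := by
        push_cast [coe_pow]; rfl
      rw [hc]; exact hq
    obtain ⟨B, hB1, hB2⟩ := zhou_comm_back A n hn hq'
    refine ⟨(B : R), ?_, ?_, n, hn, ?_⟩
    · exact congrArg Subtype.val hB1
    · intro y hy
      have hyC : y ∈ C := Subring.mem_centralizer_iff.mpr (by
        intro g hg; rw [Set.mem_singleton_iff] at hg; rw [hg]; exact hy.symm)
      exact (Subring.mem_centralizer_iff.mp B.2 y hyC).symm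
    · have hcoe : ((A ^ n - A * B : D) : R) = a ^ n - a * (B : R) := by
        push_cast [coe_pow]; rfl
      rw [← hcoe]
      exact nil_coe _ hB2
end
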